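/- arXiv:math/9904140 — 5 statements merged into one kernel-verified Lean document; each statement's English description precedes it below -/
import Mathlib

section
/- Any minimal coloring of a nontrivial tree assigns to each vertex a color at most 1 + ⌈Δ(T)/2⌉, hence every tree T with at least 2 vertices satisfies s(T) ≤ 1 + ⌈Δ(T)/2⌉, where Δ(T) is the maximum degree. -/
open Finset

/-- A proper coloring with positive integer colors. -/
def IsProperColoring {V : Type*} (G : SimpleGraph V) (f : V → ℕ) : Prop :=
  (∀ v, 1 ≤ f v) ∧ ∀ ⦃u v⦄, G.Adj u v → f u ≠ f v

/-- The chromatic sum of a graph. -/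
noncomputable def chromSum {V : Type*} [Fintype V] (G : SimpleGraph V) : ℕ :=
  sInf {s | ∃ f : V → ℕ, IsProperColoring G f ∧ ∑ v, f v = s}

/-- The strength: minimum number of distinct colors among minimal colorings. -/
noncomputable def strength {V : Type*} [Fintype V] (G : SimpleGraph V) : ℕ :=
  sInf {n | ∃ f : V → ℕ, IsProperColoring G f ∧ ∑ v, f v = chromSum G ∧
    (Finset.univ.image f).card = n}

set_option linter.unusedSectionVars false

namespace TreeStrengthAux

open SimpleGraph

variable {V : Type*} [Fintype V] {T : SimpleGraph V}

lemma chromSum_le {f : V → ℕ} (hf : IsProperColoring T f) : chromSum T ≤ ∑ v, f v :=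
  Nat.sInf_le ⟨f, hf, rfl⟩

/-- In a minimal coloring, a vertex sees every smaller positive color among its
neighbors. -/
lemma exists_nbr {f : V → ℕ} (hf : IsProperColoring T f) (hsum : ∑ v, f v = chromSum T)
    (v : V) {a : ℕ} (h1 : 1 ≤ a) (h2 : a < f v) : ∃ u, T.Adj v u ∧ f u = a := by
  classical
  by_contra h
  push_neg at h
  set g : V → ℕ := Function.update f v a with hg
  have hgp : IsProperColoring T g := by
    constructor
    · intro w
      by_cases hw : w = v
      · subst hw; simp [hg, h1]
      · simp [hg, Function.update_of_ne hw, hf.1 w]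
    · intro u w huw
      rcases eq_or_ne u v with rfl | hu
      · have hwv : w ≠ u := fun hh => T.loopless.irrefl u (hh ▸ huw)
        rw [hg]
        rw [Function.update_self, Function.update_of_ne hwv]
        exact fun hh => h w huw hh.symm
      · rcases eq_or_ne w v with rfl | hw
        · rw [hg, Function.update_of_ne hu, Function.update_self]
          exact fun hh => h u huw.symm hh
        · rw [hg, Function.update_of_ne hu, Function.update_of_ne hw]
          exact hf.2 huw
  have hsg : ∑ w, g w + f v = ∑ w, f w + a := by
    rw [hg, Finset.sum_update_of_mem (Finset.mem_univ v)]
    have h2 := Finset.add_sum_erase Finset.univ f (Finset.mem_univ v)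
    rw [Finset.erase_eq] at h2
    omega
  have hlt : ∑ w, g w < ∑ w, f w := by omega
  have := chromSum_le hgp
  omega

/-- the graph `T` with vertex `p` isolated -/
def Gdel (T : SimpleGraph V) (p : V) : SimpleGraph V where
  Adj u w := T.Adj u w ∧ u ≠ p ∧ w ≠ p
  symm := ⟨by rintro u w ⟨h, h1, h2⟩; exact ⟨h.symm, h2, h1⟩⟩
  loopless := ⟨by rintro u ⟨h, _, _⟩; exact T.loopless.irrefl u h⟩

lemma gdel_walk_end_ne {p u v : V} (w : (Gdel T p).Walk u v) (hu : u ≠ p) : v ≠ p := by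
  induction w with
  | nil => exact hu
  | cons h q ih => exact ih h.2.2

lemma gdel_not_reach {p u : V} (hu : u ≠ p) : ¬ (Gdel T p).Reachable u p := by
  rintro ⟨w⟩
  exact gdel_walk_end_ne w hu rfl

lemma gdel_walk_support_ne {p u v : V} (w : (Gdel T p).Walk u v) (hu : u ≠ p) :
    ∀ y ∈ w.support, y ≠ p := by
  induction w with
  | nil => intro y hy; simp at hy; subst hy; exact hu
  | cons h q ih =>
    intro y hy
    rw [SimpleGraph.Walk.support_cons] at hy
    rcases List.mem_cons.1 hy with rfl | hy'
    · exact hu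
    · exact ih h.2.2 y hy'

lemma walk_toGdel {p u v : V} (w : T.Walk u v) (h : ∀ y ∈ w.support, y ≠ p) :
    (Gdel T p).Reachable u v := by
  induction w with
  | nil => exact SimpleGraph.Reachable.refl _
  | @cons u' w' v' ha q ih =>
    have hmem : w' ∈ (SimpleGraph.Walk.cons ha q).support := by
      rw [SimpleGraph.Walk.support_cons]
      exact List.mem_cons_of_mem _ (SimpleGraph.Walk.start_mem_support _)
    have h1 : (Gdel T p).Adj u' w' :=
      ⟨ha, h u' (SimpleGraph.Walk.start_mem_support _), h w' hmem⟩
    refine h1.reachable.trans (ih fun y hy => h y ?_)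
    rw [SimpleGraph.Walk.support_cons]
    exact List.mem_cons_of_mem _ hy

lemma gdel_toWalk {p u v : V} (w : (Gdel T p).Walk u v) :
    ∃ w' : T.Walk u v, w'.support ⊆ w.support := by
  induction w with
  | nil => exact ⟨SimpleGraph.Walk.nil, by simp⟩
  | cons h q ih =>
    obtain ⟨w', hw'⟩ := ih
    refine ⟨SimpleGraph.Walk.cons h.1 w', ?_⟩
    rw [SimpleGraph.Walk.support_cons, SimpleGraph.Walk.support_cons]
    exact List.cons_subset_cons _ hw'

lemma walk_cons_decomp {u v : V} (q : T.Walk u v) (h : u ≠ v) :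
    ∃ (y : V) (ha : T.Adj u y) (q' : T.Walk y v), q = SimpleGraph.Walk.cons ha q' := by
  cases q with
  | nil => exact absurd rfl h
  | cons ha q' => exact ⟨_, ha, q', rfl⟩


lemma terminal_deg [DecidableRel T.Adj] {f : V → ℕ} (hf : IsProperColoring T f) {x p : V}
    (hxp : T.Adj x p) (hpx : f p < f x) (hc2 : 2 ≤ f x)
    (hA : ∀ a, 1 ≤ a → a < f x → a ≠ f p →
      2 ≤ ((T.neighborFinset x).filter (fun y => f y = a)).card) :
    2 * f x ≤ T.degree x + 3 := by
  classical
  set c := f x with hc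
  set s := T.neighborFinset x with hs
  have hfib : ∑ b ∈ Finset.Ico 1 c, ((s.filter (fun y => f y ∈ Finset.Ico 1 c)).filter
      (fun y => f y = b)).card = (s.filter (fun y => f y ∈ Finset.Ico 1 c)).card :=
    (Finset.card_eq_sum_card_fiberwise (fun y hy => (Finset.mem_filter.1 hy).2)).symm
  have hfib2 : ∀ b ∈ Finset.Ico 1 c, ((s.filter (fun y => f y ∈ Finset.Ico 1 c)).filter
      (fun y => f y = b)) = s.filter (fun y => f y = b) := by
    intro b hb
    ext y
    simp only [Finset.mem_filter, and_assoc]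
    constructor
    · rintro ⟨h1, _, h3⟩; exact ⟨h1, h3⟩
    · rintro ⟨h1, h3⟩; exact ⟨h1, h3 ▸ hb, h3⟩
  have hfib3 : ∑ b ∈ Finset.Ico 1 c, (s.filter (fun y => f y = b)).card
      = (s.filter (fun y => f y ∈ Finset.Ico 1 c)).card := by
    rw [← hfib]
    exact Finset.sum_congr rfl (fun b hb => by rw [hfib2 b hb])
  have hle1 : ∑ b ∈ Finset.Ico 1 c, (s.filter (fun y => f y = b)).card ≤ s.card := by
    rw [hfib3]; exact Finset.card_le_card (Finset.filter_subset _ _)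
  have hfpmem : f p ∈ Finset.Ico 1 c := Finset.mem_Ico.2 ⟨hf.1 p, hpx⟩
  have hterm : ∀ b ∈ Finset.Ico 1 c,
      (if b = f p then 1 else 2) ≤ (s.filter (fun y => f y = b)).card := by
    intro b hb
    rw [Finset.mem_Ico] at hb
    by_cases hb' : b = f p
    · rw [if_pos hb']
      have : p ∈ s.filter (fun y => f y = b) :=
        Finset.mem_filter.2 ⟨(T.mem_neighborFinset x p).2 hxp, hb'.symm⟩
      exact Finset.card_pos.2 ⟨p, this⟩
    · rw [if_neg hb']
      exact hA b hb.1 hb.2 hb'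
  have hsum1 : ∑ b ∈ Finset.Ico 1 c, (if b = f p then 1 else 2)
      ≤ ∑ b ∈ Finset.Ico 1 c, (s.filter (fun y => f y = b)).card :=
    Finset.sum_le_sum hterm
  have hsum2 : ∑ b ∈ Finset.Ico 1 c, (if b = f p then (1:ℕ) else 2) = 2 * (c - 1) - 1 := by
    rw [← Finset.add_sum_erase _ _ hfpmem, if_pos rfl]
    have h2 : ∑ b ∈ (Finset.Ico 1 c).erase (f p), (if b = f p then (1:ℕ) else 2)
        = 2 * ((Finset.Ico 1 c).erase (f p)).card := by
      rw [Finset.sum_congr rfl (fun b hb => if_neg (Finset.mem_erase.1 hb).1)]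
      rw [Finset.sum_const, smul_eq_mul, mul_comm]
    rw [h2, Finset.card_erase_of_mem hfpmem, Nat.card_Ico]
    omega
  have hdeg : T.degree x = s.card := rfl
  omega

lemma measure_subset (hT : T.IsTree) {p x z q : V} (hxp : T.Adj x p) (hzq : z ≠ q)
    (pzx : T.Walk z x) (hpath : pzx.IsPath) (hq : q ∈ pzx.support)
    (hp : ∀ y ∈ pzx.support, y ≠ p) (hreach : (Gdel T p).Reachable x z) :
    {w | (Gdel T q).Reachable z w} ⊆ {w | (Gdel T p).Reachable x w} \ {q} := by
  classical
  intro w' hw'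
  obtain ⟨wk⟩ := hw'
  constructor
  · by_cases hpmem : p ∈ wk.support
    · exfalso
      set wk2 := wk.takeUntil p hpmem with hwk2
      have hsup : ∀ y ∈ wk2.support, y ≠ q := gdel_walk_support_ne wk2 hzq
      obtain ⟨w3, hw3⟩ := gdel_toWalk wk2
      have hppath1 : (SimpleGraph.Walk.cons hxp.symm pzx.reverse).IsPath := by
        refine SimpleGraph.Walk.IsPath.cons hpath.reverse ?_
        rw [SimpleGraph.Walk.support_reverse, List.mem_reverse]
        exact fun hh => hp p hh rfl
      have hppath2 : w3.bypass.reverse.IsPath := w3.bypass_isPath.reverse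
      have hequ := hT.2.path_unique ⟨_, hppath1⟩ ⟨_, hppath2⟩
      have hwalkeq : SimpleGraph.Walk.cons hxp.symm pzx.reverse = w3.bypass.reverse :=
        congrArg Subtype.val hequ
      have hq1 : q ∈ (SimpleGraph.Walk.cons hxp.symm pzx.reverse).support := by
        rw [SimpleGraph.Walk.support_cons]
        refine List.mem_cons_of_mem _ ?_
        rw [SimpleGraph.Walk.support_reverse, List.mem_reverse]
        exact hq
      rw [hwalkeq] at hq1
      rw [SimpleGraph.Walk.support_reverse, List.mem_reverse] at hq1
      exact hsup q (hw3 (SimpleGraph.Walk.support_bypass_subset _ hq1)) rfl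
    · obtain ⟨w3, hw3⟩ := gdel_toWalk wk
      have : (Gdel T p).Reachable z w' := walk_toGdel w3 (fun y hy hyp => hpmem (hyp ▸ hw3 hy))
      exact hreach.trans this
  · simp only [Set.mem_singleton_iff]
    rintro rfl
    exact gdel_not_reach hzq ⟨wk⟩

lemma main_step [DecidableRel T.Adj] (hT : T.IsTree) :
    ∀ (N : ℕ) (f : V → ℕ) (x p : V), IsProperColoring T f → (∑ v, f v = chromSum T) →
    T.Adj x p → f p < f x → 2 ≤ f x →
    {w | (Gdel T p).Reachable x w}.ncard ≤ N → ∃ z, 2 * f x ≤ T.degree z + 3 := by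
  intro N
  induction N with
  | zero =>
    intro f x p _ _ _ _ _ hcard
    exfalso
    have hx : x ∈ {w | (Gdel T p).Reachable x w} := SimpleGraph.Reachable.refl x
    have h0 : 0 < {w | (Gdel T p).Reachable x w}.ncard :=
      (Set.ncard_pos (Set.toFinite _)).2 ⟨x, hx⟩
    omega
  | succ N ih =>
    intro f x p hf hsum hxp hpx hc2 hcard
    classical
    by_cases hA : ∀ a, 1 ≤ a → a < f x → a ≠ f p →
        2 ≤ ((T.neighborFinset x).filter (fun y => f y = a)).card
    · exact ⟨x, terminal_deg hf hxp hpx hc2 hA⟩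
    push_neg at hA
    obtain ⟨a, ha1, hac, hafp, hacard⟩ := hA
    obtain ⟨u, hxu, hua⟩ := exists_nbr hf hsum x ha1 hac
    set c := f x with hc
    set K : Set V := {w | ∃ q : T.Walk x w, ∀ y ∈ q.support, f y = a ∨ f y = c} with hK
    have hxK : x ∈ K := by
      refine ⟨SimpleGraph.Walk.nil, ?_⟩
      intro y hy
      simp only [SimpleGraph.Walk.support_nil, List.mem_singleton] at hy
      subst hy; right; rfl
    have hclos : ∀ w ∈ K, ∀ y, T.Adj w y → (f y = a ∨ f y = c) → y ∈ K := by
      rintro w ⟨q, hq⟩ y hwy hcol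
      refine ⟨q.concat hwy, ?_⟩
      intro t ht
      rw [SimpleGraph.Walk.support_concat] at ht
      rw [List.mem_append, List.mem_singleton] at ht
      rcases ht with h | h
      · exact hq t h
      · rw [h]; exact hcol
    have hcolK : ∀ w ∈ K, f w = a ∨ f w = c := by
      rintro w ⟨q, hq⟩; exact hq w q.end_mem_support
    have hane : a ≠ c := Nat.ne_of_lt hac
    have hfpcol : ¬ (f p = a ∨ f p = c) := by
      rintro (h | h)
      · exact hafp h.symm
      · omega
    have hKp : ∀ w ∈ K, w ≠ p := fun w hw h => hfpcol (h ▸ hcolK w hw)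
    have hKreach : ∀ w ∈ K, (Gdel T p).Reachable x w := by
      rintro w ⟨q, hq⟩
      exact walk_toGdel q (fun y hy hyp => hfpcol (hyp ▸ hq y hy))
    have huK : u ∈ K := hclos x hxK u hxu (Or.inl hua)
    have hsecond : ∀ w ∈ K, w ≠ x → ∃ (y : V) (pzx : T.Walk w x), T.Adj w y ∧
        pzx.IsPath ∧ y ∈ pzx.support ∧ (∀ t ∈ pzx.support, f t = a ∨ f t = c) ∧ y ∈ K := by
      rintro w ⟨q, hq⟩ hwx
      have hq2sup : ∀ t ∈ q.reverse.bypass.support, f t = a ∨ f t = c := by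
        intro t ht
        have h2 := q.reverse.support_bypass_subset ht
        rw [SimpleGraph.Walk.support_reverse, List.mem_reverse] at h2
        exact hq t h2
      obtain ⟨y, hadj, q3, hdecomp⟩ := walk_cons_decomp q.reverse.bypass hwx
      refine ⟨y, q.reverse.bypass, hadj, q.reverse.bypass_isPath, ?_, hq2sup, ?_⟩
      · rw [hdecomp, SimpleGraph.Walk.support_cons]
        exact List.mem_cons_of_mem _ q3.start_mem_support
      · refine ⟨q3.reverse, ?_⟩
        intro t ht
        rw [SimpleGraph.Walk.support_reverse, List.mem_reverse] at ht
        apply hq2sup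
        rw [hdecomp, SimpleGraph.Walk.support_cons]
        exact List.mem_cons_of_mem _ ht
    set KF : Finset V := (Set.toFinite K).toFinset with hKF
    have hmemKF : ∀ w, w ∈ KF ↔ w ∈ K := fun w => Set.Finite.mem_toFinset _
    set A : Finset V := KF.filter (fun w => f w = a) with hAdef
    set C : Finset V := KF.filter (fun w => f w = c) with hCdef
    have hAmem : ∀ w, w ∈ A ↔ w ∈ KF ∧ f w = a := by
      intro w; rw [hAdef]; exact Finset.mem_filter
    have hCmem : ∀ w, w ∈ C ↔ w ∈ KF ∧ f w = c := by
      intro w; rw [hCdef]; exact Finset.mem_filter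
    set g : V → ℕ := fun w => if w ∈ K then (if f w = a then c else a) else f w with hgdef
    have hgK : ∀ w ∈ K, f w = a → g w = c := by
      intro w hw hwa; rw [hgdef]; simp only [if_pos hw, if_pos hwa]
    have hgK2 : ∀ w ∈ K, f w = c → g w = a := by
      intro w hw hwc; rw [hgdef]
      simp only [if_pos hw]
      rw [if_neg (by rw [hwc]; exact fun h => hane h.symm)]
    have hgout : ∀ w, w ∉ K → g w = f w := by
      intro w hw; rw [hgdef]; simp only [if_neg hw]
    have hgproper : IsProperColoring T g := by
      constructor
      · intro w
        by_cases hw : w ∈ K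
        · rcases hcolK w hw with h | h
          · rw [hgK w hw h]; omega
          · rw [hgK2 w hw h]; omega
        · rw [hgout w hw]; exact hf.1 w
      · intro u' w' huw
        by_cases h1 : u' ∈ K <;> by_cases h2 : w' ∈ K
        · have hne := hf.2 huw
          rcases hcolK u' h1 with ha' | hc' <;> rcases hcolK w' h2 with hb' | hd'
          · exact absurd (ha'.trans hb'.symm) hne
          · rw [hgK u' h1 ha', hgK2 w' h2 hd']; exact fun h => hane h.symm
          · rw [hgK2 u' h1 hc', hgK w' h2 hb']; exact hane
          · exact absurd (hc'.trans hd'.symm) hne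
        · have hcol2 : ¬(f w' = a ∨ f w' = c) := fun hh => h2 (hclos u' h1 w' huw hh)
          rw [hgout w' h2]
          rcases hcolK u' h1 with h | h
          · rw [hgK u' h1 h]; exact fun hh => hcol2 (Or.inr hh.symm)
          · rw [hgK2 u' h1 h]; exact fun hh => hcol2 (Or.inl hh.symm)
        · have hcol2 : ¬(f u' = a ∨ f u' = c) := fun hh => h1 (hclos w' h2 u' huw.symm hh)
          rw [hgout u' h1]
          rcases hcolK w' h2 with h | h
          · rw [hgK w' h2 h]; exact fun hh => hcol2 (Or.inr hh)
          · rw [hgK2 w' h2 h]; exact fun hh => hcol2 (Or.inl hh)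
        · rw [hgout u' h1, hgout w' h2]; exact hf.2 huw
    have hCsplit : KF.filter (fun w => ¬ f w = a) = C := by
      ext w
      rw [hCdef, Finset.mem_filter, Finset.mem_filter]
      constructor
      · rintro ⟨hw, hwa⟩
        rcases hcolK w ((hmemKF w).1 hw) with h | h
        · exact absurd h hwa
        · exact ⟨hw, h⟩
      · rintro ⟨hw, hwc⟩
        exact ⟨hw, by rw [hwc]; exact fun h => hane h.symm⟩

    have hsumfK : ∑ w ∈ KF, f w = A.card * a + C.card * c := by
      rw [← Finset.sum_filter_add_sum_filter_not KF (fun w => f w = a) f, hCsplit]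
      congr 1
      · rw [← hAdef, Finset.sum_congr rfl (fun w hw => (Finset.mem_filter.1 hw).2),
          Finset.sum_const, smul_eq_mul]
      · rw [Finset.sum_congr rfl (fun w hw => ((hCmem w).1 hw).2),
          Finset.sum_const, smul_eq_mul]
    have hsumgK : ∑ w ∈ KF, g w = A.card * c + C.card * a := by
      rw [← Finset.sum_filter_add_sum_filter_not KF (fun w => f w = a) g, hCsplit]
      congr 1
      · rw [← hAdef]
        rw [Finset.sum_congr rfl (fun w hw => hgK w ((hmemKF w).1 (Finset.mem_filter.1 hw).1)
          (Finset.mem_filter.1 hw).2)]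
        rw [Finset.sum_const, smul_eq_mul]
      · rw [Finset.sum_congr rfl (fun w hw => hgK2 w ((hmemKF w).1 (Finset.mem_filter.1 hw).1)
          ((hCmem w).1 hw).2)]
        rw [Finset.sum_const, smul_eq_mul]
    have houtf : ∑ w ∈ KFᶜ, g w = ∑ w ∈ KFᶜ, f w :=
      Finset.sum_congr rfl (fun w hw => hgout w
        (fun hk => (Finset.mem_compl.1 hw) ((hmemKF w).2 hk)))
    have htotf := Finset.sum_add_sum_compl KF f
    have htotg := Finset.sum_add_sum_compl KF g
    have hfg : ∑ v, f v ≤ ∑ v, g v := hsum ▸ chromSum_le hgproper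
    have hKle : A.card * a + C.card * c ≤ A.card * c + C.card * a := by
      rw [← hsumfK, ← hsumgK]; omega
    have hCA : C.card ≤ A.card := by
      by_contra hcon
      push_neg at hcon
      have h1 : (A.card : ℤ) < C.card := by exact_mod_cast hcon
      have h2 : (a : ℤ) < c := by exact_mod_cast hac
      have h3 : (A.card : ℤ) * a + C.card * c ≤ A.card * c + C.card * a := by exact_mod_cast hKle
      nlinarith [mul_pos (sub_pos.2 h1) (sub_pos.2 h2)]
    rcases eq_or_lt_of_le hCA with heq | hlt
    · -- balanced case: swap colors on the chain and recurse at u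
      have hsumg : ∑ v, g v = chromSum T := by
        have e1 : ∑ w ∈ KF, g w = ∑ w ∈ KF, f w := by rw [hsumgK, hsumfK, heq]; ring
        have e2 : ∑ v, g v = ∑ v, f v := by omega
        rw [e2, hsum]
      have hgu : g u = c := hgK u huK hua
      have hgx : g x = a := hgK2 x hxK rfl
      have hsub : {w | (Gdel T x).Reachable u w} ⊆ {w | (Gdel T p).Reachable x w} \ {x} := by
        refine measure_subset hT hxp hxu.ne' (SimpleGraph.Walk.cons hxu.symm SimpleGraph.Walk.nil)
          ?_ (by simp) ?_ (hKreach u huK)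
        · simp [hxu.ne']
        · intro y hy
          simp only [SimpleGraph.Walk.support_cons, SimpleGraph.Walk.support_nil,
            List.mem_cons, List.mem_singleton] at hy
          rcases hy with hy | hy
          · rw [hy]; exact hKp u huK
          · rcases hy with hy | hy
            · rw [hy]; exact hKp x hxK
            · simp at hy
      have hcard2 : {w | (Gdel T x).Reachable u w}.ncard ≤ N := by
        have hxS : x ∈ {w | (Gdel T p).Reachable x w} := SimpleGraph.Reachable.refl x
        have h1 : {w | (Gdel T x).Reachable u w}.ncard ≤
            ({w | (Gdel T p).Reachable x w} \ {x}).ncard :=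
          Set.ncard_le_ncard hsub (Set.toFinite _)
        have h2 : ({w | (Gdel T p).Reachable x w} \ {x}).ncard <
            {w | (Gdel T p).Reachable x w}.ncard :=
          Set.ncard_diff_singleton_lt_of_mem hxS (Set.toFinite _)
        omega
      obtain ⟨z, hz⟩ := ih g u x hgproper hsumg hxu.symm (by rw [hgx, hgu]; exact hac)
        (by rw [hgu]; exact hc2) hcard2
      rw [hgu] at hz
      exact ⟨z, hz⟩
    · -- unbalanced: pigeonhole, recurse deeper with the same coloring
      set Pf : V → V := fun w =>
        if h : ∃ y, T.Adj w y ∧ f y = c ∧ y ∈ K then h.choose else x with hPfdef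
      have hPf : ∀ w ∈ A, T.Adj w (Pf w) ∧ f (Pf w) = c ∧ Pf w ∈ K := by
        intro w hw
        obtain ⟨hw1, hw2⟩ := Finset.mem_filter.1 hw
        have hwK : w ∈ K := (hmemKF w).1 hw1
        have hwx : w ≠ x := fun hh => hane (by rw [← hw2, hh])
        obtain ⟨y, pzx, hadj, _, _, _, hyK⟩ := hsecond w hwK hwx
        have hyc : f y = c := by
          rcases hcolK y hyK with h | h
          · exact absurd (hw2.trans h.symm) (hf.2 hadj)
          · exact h
        have hex : ∃ y', T.Adj w y' ∧ f y' = c ∧ y' ∈ K := ⟨y, hadj, hyc, hyK⟩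
        rw [hPfdef]
        simp only [dif_pos hex]
        exact hex.choose_spec
      have hmaps : ∀ w ∈ A, Pf w ∈ C := fun w hw =>
        Finset.mem_filter.2 ⟨(hmemKF _).2 (hPf w hw).2.2, (hPf w hw).2.1⟩
      obtain ⟨y₁, hy₁, y₂, hy₂, hyne, hPeq⟩ :=
        Finset.exists_ne_map_eq_of_card_lt_of_maps_to hlt hmaps
      have hz1 : T.Adj (Pf y₁) y₁ := (hPf y₁ hy₁).1.symm
      have hz2 : T.Adj (Pf y₁) y₂ := by
        rw [hPeq]; exact (hPf y₂ hy₂).1.symm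
      have hzc : f (Pf y₁) = c := (hPf y₁ hy₁).2.1
      have hzK : Pf y₁ ∈ K := (hPf y₁ hy₁).2.2
      have hzx : Pf y₁ ≠ x := by
        intro hh
        have h1 : y₁ ∈ (T.neighborFinset x).filter (fun y => f y = a) :=
          Finset.mem_filter.2 ⟨(T.mem_neighborFinset _ _).2 (hh ▸ hz1),
            (Finset.mem_filter.1 hy₁).2⟩
        have h2 : y₂ ∈ (T.neighborFinset x).filter (fun y => f y = a) :=
          Finset.mem_filter.2 ⟨(T.mem_neighborFinset _ _).2 (hh ▸ hz2),
            (Finset.mem_filter.1 hy₂).2⟩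
        have h3 : 1 < ((T.neighborFinset x).filter (fun y => f y = a)).card :=
          Finset.one_lt_card.2 ⟨y₁, h1, y₂, h2, hyne⟩
        omega
      obtain ⟨q, pzx, hadjzq, hpathzx, hqsup, hcolsup, hqK⟩ := hsecond (Pf y₁) hzK hzx
      have hqa : f q = a := by
        rcases hcolK q hqK with h | h
        · exact h
        · exact absurd (hzc.trans h.symm) (hf.2 hadjzq)
      have hsub : {w | (Gdel T q).Reachable (Pf y₁) w} ⊆
          {w | (Gdel T p).Reachable x w} \ {q} :=
        measure_subset hT hxp hadjzq.ne pzx hpathzx hqsup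
          (fun y hy hyp => hfpcol (hyp ▸ hcolsup y hy)) (hKreach _ hzK)
      have hcard2 : {w | (Gdel T q).Reachable (Pf y₁) w}.ncard ≤ N := by
        have hqS : q ∈ {w | (Gdel T p).Reachable x w} := hKreach q hqK
        have h1 := Set.ncard_le_ncard hsub (Set.toFinite _)
        have h2 := Set.ncard_diff_singleton_lt_of_mem hqS (Set.toFinite _)
        omega
      obtain ⟨z', hz'⟩ := ih f (Pf y₁) q hf hsum hadjzq (by rw [hqa, hzc]; exact hac)
        (by rw [hzc]; exact hc2) hcard2
      rw [hzc] at hz'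
      exact ⟨z', hz'⟩

end TreeStrengthAux

theorem tree_strength_le {V : Type*} [Fintype V] (T : SimpleGraph V) [DecidableRel T.Adj]
    (hT : T.IsTree) (hV : 2 ≤ Fintype.card V) :
    (∀ f : V → ℕ, IsProperColoring T f → ∑ v, f v = chromSum T →
        ∀ v, f v ≤ 1 + (T.maxDegree + 1) / 2) ∧
      strength T ≤ 1 + (T.maxDegree + 1) / 2 := by
  classical
  have hpart1 : ∀ f : V → ℕ, IsProperColoring T f → ∑ v, f v = chromSum T →
      ∀ v, f v ≤ 1 + (T.maxDegree + 1) / 2 := by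
    intro f hf hsum v
    by_cases h2 : 2 ≤ f v
    · obtain ⟨p, hvp, hfp⟩ := TreeStrengthAux.exists_nbr hf hsum v (le_refl 1) (by omega)
      have hplt : f p < f v := by omega
      have hmeas : {w | (TreeStrengthAux.Gdel T p).Reachable v w}.ncard ≤ Fintype.card V := by
        have h1 := Set.ncard_le_ncard (Set.subset_univ
          {w | (TreeStrengthAux.Gdel T p).Reachable v w}) (Set.toFinite _)
        rwa [Set.ncard_univ, Nat.card_eq_fintype_card] at h1
      obtain ⟨z, hz⟩ := TreeStrengthAux.main_step hT (Fintype.card V) f v p hf hsum hvp hplt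
        h2 hmeas
      have hdz := T.degree_le_maxDegree z
      omega
    · omega
  refine ⟨hpart1, ?_⟩
  have hne : {s | ∃ f : V → ℕ, IsProperColoring T f ∧ ∑ v, f v = s}.Nonempty := by
    refine ⟨∑ v, ((Fintype.equivFin V v : ℕ) + 1), fun v => (Fintype.equivFin V v : ℕ) + 1,
      ⟨fun v => by simp, ?_⟩, rfl⟩
    intro u w huw h
    simp only [Nat.add_right_cancel_iff] at h
    exact huw.ne ((Fintype.equivFin V).injective (Fin.val_injective h))
  obtain ⟨f1, hf1, hsum1⟩ := Nat.sInf_mem hne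
  have hbound := hpart1 f1 hf1 hsum1
  have himg : (Finset.univ.image f1) ⊆ Finset.Icc 1 (1 + (T.maxDegree + 1) / 2) := by
    intro b hb
    obtain ⟨w, _, rfl⟩ := Finset.mem_image.1 hb
    exact Finset.mem_Icc.2 ⟨hf1.1 w, hbound w⟩
  have hcard : (Finset.univ.image f1).card ≤ 1 + (T.maxDegree + 1) / 2 := by
    have h1 := Finset.card_le_card himg
    rwa [Nat.card_Icc, Nat.add_sub_cancel] at h1
  exact le_trans (Nat.sInf_le ⟨f1, hf1, hsum1, rfl⟩) hcard
end

section
/- In the recursive construction of T_i^j, the maximum color used by the coloring f_i^j is exactly i + j − 1. -/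
/-- A rooted tree with a natural-number color at each vertex. -/
inductive CTree where
  | node : ℕ → List CTree → CTree

namespace CTree

/-- The color of the root. -/
def color : CTree → ℕ
  | node c _ => c

/-- The list of child subtrees of the root. -/
def children : CTree → List CTree
  | node _ l => l

/-- The sum of all colors in the tree. -/
def sumColors : CTree → ℕ
  | node c l => c + (l.attach.map fun ⟨t, _⟩ => sumColors t).sum
decreasing_by
  simp only [CTree.node.sizeOf_spec]
  rename_i hm
  have := List.sizeOf_lt_of_mem hm
  omega

/-- The maximum color used in the tree. -/
def maxColor : CTree → ℕ
  | node c l => max c ((l.attach.map fun ⟨t, _⟩ => maxColor t).foldr max 0)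
decreasing_by
  simp only [CTree.node.sizeOf_spec]
  rename_i hm
  have := List.sizeOf_lt_of_mem hm
  omega

/-- The coloring is proper: colors are positive and each child's root color
differs from its parent's color. -/
def Proper : CTree → Prop
  | node c l => 1 ≤ c ∧ ∀ t ∈ l, color t ≠ c ∧ Proper t
decreasing_by
  simp only [CTree.node.sizeOf_spec]
  rename_i hm
  have := List.sizeOf_lt_of_mem hm
  omega

/-- Two colored rooted trees have the same underlying (rooted) tree shape. -/
def SameShape : CTree → CTree → Prop
  | node _ l, node _ l' => l.length = l'.length ∧ ∀ p ∈ l.zip l', SameShape p.1 p.2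
termination_by t _ => sizeOf t
decreasing_by
  simp only [CTree.node.sizeOf_spec]
  rename_i hm
  have := List.sizeOf_lt_of_mem (List.of_mem_zip hm).1
  omega

/-- The maximum degree among vertices of a subtree hanging below a root
(the subtree's own root has an extra edge to its parent). -/
def maxDegAux : CTree → ℕ
  | node _ l => max (l.length + 1) ((l.attach.map fun ⟨t, _⟩ => maxDegAux t).foldr max 0)
decreasing_by
  simp only [CTree.node.sizeOf_spec]
  rename_i hm
  have := List.sizeOf_lt_of_mem hm
  omega

/-- The maximum degree of the rooted tree. -/
def maxDeg : CTree → ℕ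
  | node _ l => max l.length ((l.attach.map fun ⟨t, _⟩ => maxDegAux t).foldr max 0)

/-- The set of colors used in the tree. -/
def colorFinset : CTree → Finset ℕ
  | node c l => insert c ((l.attach.map fun ⟨t, _⟩ => colorFinset t).foldr (· ∪ ·) ∅)
decreasing_by
  simp only [CTree.node.sizeOf_spec]
  rename_i hm
  have := List.sizeOf_lt_of_mem hm
  omega

end CTree

open CTree in
/-- The tree `T_i^j` of the construction, together with its coloring `f_i^j`:
the root is colored `i` and has, for each `k` with `1 ≤ k ≤ i+j-1` and `k ≠ i`,
two child copies of `T_k^{⌈(i+j-k)/2⌉}` colored by `f_k^{⌈(i+j-k)/2⌉}`. -/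
def buildT (i j : ℕ) : CTree :=
  if j = 0 ∨ i + j ≤ 2 then .node i []
  else .node i <|
    (List.range (i + j - 1)).attach.flatMap fun ⟨k', _⟩ =>
      let k := k' + 1
      if k = i then []
      else
        let m := (i + j - k + 1) / 2
        [buildT k m, buildT k m]
termination_by (i + j, j)
decreasing_by
  all_goals
  · rename_i hcond hmem hne
    have hk' : k' < i + j - 1 := List.mem_range.mp hmem
    push_neg at hcond
    rcases Nat.lt_or_ge (k' + 1 + (i + j - (k' + 1) + 1) / 2) (i + j) with hlt | hge
    · exact Prod.Lex.left _ _ hlt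
    · have heq : k' + 1 + (i + j - (k' + 1) + 1) / 2 = i + j := by omega
      rw [heq]
      exact Prod.Lex.right _ (by omega)

lemma foldr_max_le {l : List ℕ} {n : ℕ} (h : ∀ x ∈ l, x ≤ n) : l.foldr max 0 ≤ n := by
  induction l with
  | nil => exact Nat.zero_le n
  | cons a t ih =>
    simp only [List.foldr_cons]
    exact max_le (h a (by simp)) (ih fun x hx => h x (by simp [hx]))

lemma le_foldr_max {l : List ℕ} {x : ℕ} (h : x ∈ l) : x ≤ l.foldr max 0 := by
  induction l with
  | nil => simp at h
  | cons a t ih =>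
    simp only [List.foldr_cons]
    rcases List.mem_cons.mp h with rfl | h
    · exact le_max_left _ _
    · exact le_trans (ih h) (le_max_right _ _)

lemma maxColor_node (c : ℕ) (l : List CTree) :
    CTree.maxColor (.node c l) = max c ((l.map CTree.maxColor).foldr max 0) := by
  rw [CTree.maxColor]
  congr 1
  simp [List.attach_map_val]

open CTree in
lemma buildT_eq (i j : ℕ) (h : ¬(j = 0 ∨ i + j ≤ 2)) :
    buildT i j = .node i ((List.range (i + j - 1)).attach.flatMap fun ⟨k', _⟩ =>
      if k' + 1 = i then []
      else [buildT (k' + 1) ((i + j - (k' + 1) + 1) / 2),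
            buildT (k' + 1) ((i + j - (k' + 1) + 1) / 2)]) := by
  rw [buildT, if_neg h]

/-- The maximum color used by the coloring `f_i^j` of `T_i^j` is exactly `i+j-1`. -/
theorem buildT_maxColor (i j : ℕ) (hi : 1 ≤ i) (hj : 1 ≤ j) :
    CTree.maxColor (buildT i j) = i + j - 1 := by
  by_cases h : j = 0 ∨ i + j ≤ 2
  · have hij : i = 1 ∧ j = 1 := by omega
    obtain ⟨rfl, rfl⟩ := hij
    rw [buildT]
    simp [maxColor_node]
  · rw [buildT_eq i j h, maxColor_node]
    set L := (List.range (i + j - 1)).attach.flatMap fun (p : {x // x ∈ List.range (i + j - 1)}) =>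
      if p.1 + 1 = i then []
      else [buildT (p.1 + 1) ((i + j - (p.1 + 1) + 1) / 2),
            buildT (p.1 + 1) ((i + j - (p.1 + 1) + 1) / 2)] with hL
    have hmem : ∀ t ∈ L, ∃ k', k' < i + j - 1 ∧ k' + 1 ≠ i ∧
        t = buildT (k' + 1) ((i + j - (k' + 1) + 1) / 2) := by
      intro t ht
      rw [hL] at ht
      obtain ⟨⟨k', hk'⟩, -, hmem2⟩ := List.mem_flatMap.mp ht
      by_cases hki : k' + 1 = i
      · simp [hki] at hmem2
      · refine ⟨k', List.mem_range.mp hk', hki, ?_⟩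
        simp only [if_neg hki, List.mem_cons, List.not_mem_nil, or_false] at hmem2
        rcases hmem2 with rfl | rfl <;> rfl
    have hub : (L.map CTree.maxColor).foldr max 0 ≤ i + j - 1 := by
      apply foldr_max_le
      intro x hx
      obtain ⟨t, ht, rfl⟩ := List.mem_map.mp hx
      obtain ⟨k', hk'lt, hki, rfl⟩ := hmem t ht
      have hm1 : 1 ≤ (i + j - (k' + 1) + 1) / 2 := by omega
      rw [buildT_maxColor (k' + 1) ((i + j - (k' + 1) + 1) / 2) (by omega) hm1]
      omega
    by_cases hj2 : j = 1
    · subst hj2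
      omega
    · -- j ≥ 2 : witness child with max color i+j-1
      have hj2' : 2 ≤ j := by omega
      have hwit : buildT (i + j - 1) 1 ∈ L := by
        rw [hL]
        apply List.mem_flatMap.mpr
        refine ⟨⟨i + j - 2, List.mem_range.mpr (by omega)⟩, List.mem_attach _ _, ?_⟩
        have hne : i + j - 2 + 1 ≠ i := by omega
        simp only [if_neg hne]
        have h1 : i + j - 2 + 1 = i + j - 1 := by omega
        rw [h1, show (i + j - (i + j - 1) + 1) / 2 = 1 from by omega]
        simp
      have hlb : i + j - 1 ≤ (L.map CTree.maxColor).foldr max 0 := by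
        have := le_foldr_max (List.mem_map_of_mem (f := CTree.maxColor) hwit)
        rwa [buildT_maxColor (i + j - 1) 1 (by omega) le_rfl] at this
      omega
termination_by (i + j, j)
decreasing_by
  · rcases Nat.lt_or_ge (k' + 1 + (i + j - (k' + 1) + 1) / 2) (i + j) with hlt | hge
    · exact Prod.Lex.left _ _ hlt
    · have heq : k' + 1 + (i + j - (k' + 1) + 1) / 2 = i + j := by omega
      rw [heq]
      exact Prod.Lex.right _ (by omega)
  · have : i + j - 1 + 1 = i + j := by omega
    rw [this]
    exact Prod.Lex.right _ (by omega)
end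

section
/- For the recursively constructed trees T_i^j with colorings f_i^j: f_i^j is the unique minimal coloring of T_i^j; moreover, any proper coloring f' of T_i^j assigning the root a color different from i satisfies Σf' − Σf_i^j ≥ j. -/
open CTree

lemma sumColors_node (c : ℕ) (l : List CTree) :
    (CTree.node c l).sumColors = c + (l.map CTree.sumColors).sum := by
  rw [CTree.sumColors]
  simp [List.attach_map_val]

lemma sameShape_node {a b : ℕ} {l l' : List CTree} :
    CTree.SameShape (.node a l) (.node b l') ↔
      l.length = l'.length ∧ ∀ p ∈ l.zip l', CTree.SameShape p.1 p.2 := by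
  rw [CTree.SameShape]

lemma proper_node {c : ℕ} {l : List CTree} :
    CTree.Proper (.node c l) ↔ 1 ≤ c ∧ ∀ t ∈ l, CTree.color t ≠ c ∧ CTree.Proper t := by
  rw [CTree.Proper]

lemma buildT_color (i j : ℕ) : (buildT i j).color = i := by
  rw [buildT]; split <;> rfl

lemma zip_sum_le (f w : CTree → ℕ) :
    ∀ (L M : List CTree), L.length = M.length →
      (∀ p ∈ L.zip M, f p.1 + w p.1 ≤ f p.2) →
      (L.map f).sum + (L.map w).sum ≤ (M.map f).sum := by
  intro L
  induction L with
  | nil => intro M _ _; simp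
  | cons a L ih =>
    intro M hlen hle
    cases M with
    | nil => simp at hlen
    | cons b M =>
      have h1 : f a + w a ≤ f b :=
        hle (a, b) (by rw [List.zip_cons_cons]; exact List.mem_cons_self)
      have h2 := ih M (by simpa using hlen)
        (fun p hp => hle p (by rw [List.zip_cons_cons]; exact List.mem_cons_of_mem _ hp))
      simp only [List.map_cons, List.sum_cons]
      omega

lemma zip_sum_lt (f : CTree → ℕ) :
    ∀ (L M : List CTree), L.length = M.length →
      (∀ p ∈ L.zip M, f p.1 ≤ f p.2 ∧ (p.1 ≠ p.2 → f p.1 < f p.2)) →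
      L ≠ M → (L.map f).sum < (M.map f).sum := by
  intro L
  induction L with
  | nil =>
    intro M hlen _ hne
    cases M with
    | nil => exact absurd rfl hne
    | cons b M => simp at hlen
  | cons a L ih =>
    intro M hlen hle hne
    cases M with
    | nil => simp at hlen
    | cons b M =>
      have h1 : f a ≤ f b ∧ (a ≠ b → f a < f b) :=
        hle (a, b) (by rw [List.zip_cons_cons]; exact List.mem_cons_self)
      have hrest : ∀ p ∈ L.zip M, f p.1 ≤ f p.2 ∧ (p.1 ≠ p.2 → f p.1 < f p.2) :=
        fun p hp => hle p (by rw [List.zip_cons_cons]; exact List.mem_cons_of_mem _ hp)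
      simp only [List.map_cons, List.sum_cons]
      by_cases hab : a = b
      · subst hab
        have hML : L ≠ M := by intro h; exact hne (by rw [h])
        have := ih M (by simpa using hlen) hrest hML
        omega
      · have hlt := h1.2 hab
        have hle2 := zip_sum_le f (fun _ => 0) L M (by simpa using hlen)
          (fun p hp => by simpa using (hrest p hp).1)
        simp only [List.map_const', List.sum_replicate, smul_eq_mul, mul_zero,
          add_zero] at hle2
        omega

lemma main_step (i j c : ℕ) (hi : 1 ≤ i) (hj : 1 ≤ j) (L M : List CTree)
    (hmem : ∀ a ∈ L, ∃ k, 1 ≤ k ∧ k ≠ i ∧ k < i + j ∧ a = buildT k ((i+j-k+1)/2))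
    (hsub : ∀ c', 1 ≤ c' → c' ≠ i → c' < i + j →
        List.Sublist [buildT c' ((i+j-c'+1)/2), buildT c' ((i+j-c'+1)/2)] L)
    (IH : ∀ k, 1 ≤ k → k ≠ i → k < i + j →
        ∀ g, CTree.SameShape (buildT k ((i+j-k+1)/2)) g → CTree.Proper g →
          (g ≠ buildT k ((i+j-k+1)/2) →
            CTree.sumColors (buildT k ((i+j-k+1)/2)) < CTree.sumColors g) ∧
          (g.color ≠ k →
            CTree.sumColors (buildT k ((i+j-k+1)/2)) + (i+j-k+1)/2 ≤ CTree.sumColors g))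
    (hlen : L.length = M.length)
    (hshape : ∀ p ∈ L.zip M, CTree.SameShape p.1 p.2)
    (hc : 1 ≤ c) (hM : ∀ t ∈ M, CTree.color t ≠ c ∧ CTree.Proper t) :
    (¬(c = i ∧ M = L) →
      i + (L.map CTree.sumColors).sum < c + (M.map CTree.sumColors).sum) ∧
    (c ≠ i → i + (L.map CTree.sumColors).sum + j ≤ c + (M.map CTree.sumColors).sum) := by
  classical
  have key : ∀ p ∈ L.zip M, CTree.sumColors p.1 ≤ CTree.sumColors p.2 ∧
      (p.1 ≠ p.2 → CTree.sumColors p.1 < CTree.sumColors p.2) := by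
    intro p hp
    obtain ⟨k, hk, hki, hklt, hpk⟩ := hmem p.1 (List.of_mem_zip hp).1
    have hpM := hM p.2 (List.of_mem_zip hp).2
    have hIH := IH k hk hki hklt p.2 (by rw [← hpk]; exact hshape p hp) hpM.2
    constructor
    · by_cases he : p.2 = buildT k ((i+j-k+1)/2)
      · rw [hpk, he]
      · rw [hpk]; exact le_of_lt (hIH.1 he)
    · intro hne
      rw [hpk]
      exact hIH.1 (by rw [← hpk]; exact Ne.symm hne)
  have hb2 : c ≠ i → i + (L.map CTree.sumColors).sum + j
      ≤ c + (M.map CTree.sumColors).sum := by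
    intro hci
    rcases lt_or_ge c (i + j) with hcl | hcl
    · set mc := (i + j - c + 1) / 2 with hmc
      have hpt : ∀ p ∈ L.zip M,
          CTree.sumColors p.1 + (if p.1 = buildT c mc then mc else 0)
            ≤ CTree.sumColors p.2 := by
        intro p hp
        by_cases he : p.1 = buildT c mc
        · rw [if_pos he]
          obtain ⟨k, hk, hki, hklt, hpk⟩ := hmem p.1 (List.of_mem_zip hp).1
          have hkc : k = c := by
            have h1 : p.1.color = k := by rw [hpk]; exact buildT_color _ _
            have h2 : p.1.color = c := by rw [he]; exact buildT_color _ _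
            omega
          subst hkc
          have hpM := hM p.2 (List.of_mem_zip hp).2
          have hIH := IH k hk hki hklt p.2 (by rw [← hpk]; exact hshape p hp) hpM.2
          have := hIH.2 hpM.1
          rw [he]
          exact this
        · rw [if_neg he]
          simpa using (key p hp).1
      have h1 := zip_sum_le CTree.sumColors
        (fun t => if t = buildT c mc then mc else 0) L M hlen hpt
      have h2 : mc + mc ≤ (L.map fun t => if t = buildT c mc then mc else 0).sum := by
        have hs := (hsub c hc hci hcl).map (fun t => if t = buildT c mc then mc else 0)
        have := hs.sum_le_sum (fun a _ => Nat.zero_le a)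
        rw [← hmc] at this
        simpa using this
      have h3 : i + j ≤ c + (mc + mc) := by omega
      omega
    · have h1 := zip_sum_le CTree.sumColors (fun _ => 0) L M hlen
        (fun p hp => by simpa using (key p hp).1)
      simp only [List.map_const', List.sum_replicate, smul_eq_mul, mul_zero,
        add_zero] at h1
      omega
  constructor
  · intro hne
    by_cases hci : c = i
    · subst hci
      have hMne : M ≠ L := fun h => hne ⟨rfl, h⟩
      have := zip_sum_lt CTree.sumColors L M hlen key (fun h => hMne h.symm)
      omega
    · have := hb2 hci; omega
  · exact hb2

/-- `f_i^j` is the unique minimal coloring of `T_i^j`: any other proper coloring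
of the same tree has strictly larger sum; moreover a proper coloring giving the
root a color other than `i` has sum at least `j` more. -/
theorem buildT_unique_minimal (i j : ℕ) (hi : 1 ≤ i) (hj : 1 ≤ j) :
    ∀ g : CTree, CTree.SameShape (buildT i j) g → CTree.Proper g →
      (g ≠ buildT i j → CTree.sumColors (buildT i j) < CTree.sumColors g) ∧
      (g.color ≠ i → CTree.sumColors (buildT i j) + j ≤ CTree.sumColors g) := by
  by_cases hb : i + j ≤ 2
  · obtain rfl : i = 1 := by omega
    obtain rfl : j = 1 := by omega
    intro g hs hp
    obtain ⟨c, M⟩ := g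
    have hB : buildT 1 1 = CTree.node 1 [] := by rw [buildT]; simp
    rw [hB] at hs ⊢
    rw [sameShape_node] at hs
    obtain rfl : M = [] := List.eq_nil_of_length_eq_zero (by simpa using hs.1.symm)
    rw [proper_node] at hp
    have hc := hp.1
    simp only [sumColors_node, List.map_nil, List.sum_nil]
    constructor
    · intro hne
      have hcne : c ≠ 1 := by
        intro h; subst h; exact hne rfl
      omega
    · intro hne
      have hcne : c ≠ 1 := by simpa [CTree.color] using hne
      omega
  · have IH : ∀ k, 1 ≤ k → k ≠ i → k < i + j →
        ∀ g, CTree.SameShape (buildT k ((i+j-k+1)/2)) g → CTree.Proper g →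
          (g ≠ buildT k ((i+j-k+1)/2) →
            CTree.sumColors (buildT k ((i+j-k+1)/2)) < CTree.sumColors g) ∧
          (g.color ≠ k →
            CTree.sumColors (buildT k ((i+j-k+1)/2)) + (i+j-k+1)/2 ≤ CTree.sumColors g) :=
      fun k hk hki hklt => buildT_unique_minimal k ((i+j-k+1)/2) hk (by omega)
    obtain ⟨L, hL, hmem, hsub⟩ : ∃ L, buildT i j = CTree.node i L ∧
        (∀ a ∈ L, ∃ k, 1 ≤ k ∧ k ≠ i ∧ k < i + j ∧ a = buildT k ((i+j-k+1)/2)) ∧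
        (∀ c', 1 ≤ c' → c' ≠ i → c' < i + j →
          List.Sublist [buildT c' ((i+j-c'+1)/2), buildT c' ((i+j-c'+1)/2)] L) := by
      refine ⟨_, by rw [buildT, if_neg (by omega)], ?_, ?_⟩
      · intro a ha
        rw [List.mem_flatMap] at ha
        obtain ⟨x, hx, hax⟩ := ha
        obtain ⟨k', hk'⟩ := x
        have hk'r : k' < i + j - 1 := List.mem_range.mp hk'
        by_cases hki : k' + 1 = i
        · simp [hki] at hax
        · simp only [hki, if_false, List.mem_cons, List.not_mem_nil, or_false,
            or_self] at hax
          exact ⟨k' + 1, by omega, hki, by omega, hax⟩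
      · intro c' hc1 hci hcl
        have hx : (⟨c' - 1, List.mem_range.mpr (by omega)⟩ :
            {x // x ∈ List.range (i+j-1)}) ∈ (List.range (i+j-1)).attach :=
          List.mem_attach _ _
        have key : List.Sublist
            ((fun (x : {x // x ∈ List.range (i + j - 1)}) =>
              match x with
              | ⟨k', _⟩ =>
                let k := k' + 1
                if k = i then []
                else
                  let m := (i + j - k + 1) / 2
                  [buildT k m, buildT k m]) ⟨c' - 1, List.mem_range.mpr (by omega)⟩)
            ((List.range (i + j - 1)).attach.flatMap fun x =>
              match x with
              | ⟨k', _⟩ =>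
                let k := k' + 1
                if k = i then []
                else
                  let m := (i + j - k + 1) / 2
                  [buildT k m, buildT k m]) := by
          rw [List.flatMap_def]
          exact List.sublist_flatten_of_mem (List.mem_map_of_mem hx)
        have hcc : c' - 1 + 1 = c' := by omega
        simpa [hcc, hci] using key
    intro g hs hp
    obtain ⟨c, M⟩ := g
    rw [hL] at hs ⊢
    rw [sameShape_node] at hs
    rw [proper_node] at hp
    have hms := main_step i j c hi hj L M hmem hsub IH hs.1 hs.2 hp.1 hp.2
    simp only [sumColors_node]
    constructor
    · intro hne
      refine hms.1 ?_
      rintro ⟨rfl, rfl⟩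
      exact hne rfl
    · intro hcol
      exact hms.2 (by simpa [CTree.color] using hcol)
termination_by (i + j, j)
decreasing_by
  rcases Nat.lt_or_ge (k + (i + j - k + 1) / 2) (i + j) with hlt | hge
  · exact Prod.Lex.left _ _ hlt
  · have heq : k + (i + j - k + 1) / 2 = i + j := by omega
    rw [heq]
    exact Prod.Lex.right _ (by omega)
end

section
/- For every positive integer i, there exists a tree T with strength s(T) = i and maximum degree Δ(T) = 2i − 2. -/
open Finset

namespace TS
open scoped Classical
structure RG where
  α : Type
  [fin : Fintype α]
  [deq : DecidableEq α]
  G : SimpleGraph α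
  root : α
attribute [instance] RG.fin RG.deq
def Link {α β : Type} (G : SimpleGraph α) (a : α) (H : SimpleGraph β) (b : β) :
    SimpleGraph (α ⊕ β) where
  Adj x y :=
    match x, y with
    | .inl u, .inl v => G.Adj u v
    | .inr u, .inr v => H.Adj u v
    | .inl u, .inr v => u = a ∧ v = b
    | .inr u, .inl v => v = a ∧ u = b
  symm := by
    constructor
    rintro (u|u) (v|v) h
    · exact G.adj_symm h
    · exact h
    · exact h
    · exact H.adj_symm h
  loopless := by
    constructor
    rintro (u|u) h
    · exact G.loopless.irrefl u h
    · exact H.loopless.irrefl u h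
@[simp] lemma Link_adj_inl_inl {α β : Type} (G : SimpleGraph α) (a : α) (H : SimpleGraph β)
    (b : β) (u v : α) : (Link G a H b).Adj (.inl u) (.inl v) ↔ G.Adj u v := Iff.rfl
@[simp] lemma Link_adj_inr_inr {α β : Type} (G : SimpleGraph α) (a : α) (H : SimpleGraph β)
    (b : β) (u v : β) : (Link G a H b).Adj (.inr u) (.inr v) ↔ H.Adj u v := Iff.rfl
@[simp] lemma Link_adj_inl_inr {α β : Type} (G : SimpleGraph α) (a : α) (H : SimpleGraph β)
    (b : β) (u : α) (v : β) : (Link G a H b).Adj (.inl u) (.inr v) ↔ u = a ∧ v = b := Iff.rfl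
@[simp] lemma Link_adj_inr_inl {α β : Type} (G : SimpleGraph α) (a : α) (H : SimpleGraph β)
    (b : β) (u : β) (v : α) : (Link G a H b).Adj (.inr u) (.inl v) ↔ v = a ∧ u = b := Iff.rfl
@[reducible] def singl : RG := { α := PUnit, G := ⊥, root := PUnit.unit }

instance : Subsingleton singl.α := inferInstanceAs (Subsingleton PUnit)
@[reducible] def RG.link (A B : RG) : RG :=
  { α := A.α ⊕ B.α, G := Link A.G A.root B.G B.root, root := Sum.inl A.root }
@[simp] lemma link_alpha (A B : RG) : (A.link B).α = (A.α ⊕ B.α) := rfl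
@[simp] lemma link_root (A B : RG) : (A.link B).root = Sum.inl A.root := rfl
@[simp] lemma link_G (A B : RG) : (A.link B).G = Link A.G A.root B.G B.root := rfl

/-! ### part 2 : colorings and the rooted min-cost function -/

lemma proper_link_iff (A B : RG) (f : A.α ⊕ B.α → ℕ) :
    IsProperColoring (A.link B).G f ↔
      IsProperColoring A.G (f ∘ Sum.inl) ∧ IsProperColoring B.G (f ∘ Sum.inr) ∧
        f (Sum.inl A.root) ≠ f (Sum.inr B.root) := by
  constructor
  · rintro ⟨h1, h2⟩
    exact ⟨⟨fun v => h1 _, fun u v h => h2 (by simpa using h)⟩,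
      ⟨fun v => h1 _, fun u v h => h2 (by simpa using h)⟩,
      h2 (by simp [RG.link])⟩
  · rintro ⟨⟨ha1, ha2⟩, ⟨hb1, hb2⟩, hr⟩
    refine ⟨fun v => ?_, fun u v h => ?_⟩
    · rcases v with v | v
      · exact ha1 v
      · exact hb1 v
    · rcases u with u | u <;> rcases v with v | v
      · exact ha2 (by simpa using h)
      · obtain ⟨rfl, rfl⟩ := h
        exact hr
      · obtain ⟨rfl, rfl⟩ := h
        exact hr.symm
      · exact hb2 (by simpa using h)

lemma sum_link (A B : RG) (f : A.α ⊕ B.α → ℕ) :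
    ∑ v : (A.link B).α, f v = (∑ v : A.α, f (Sum.inl v)) + ∑ v : B.α, f (Sum.inr v) :=
  Fintype.sum_sum_type f

/-- minimum total cost of a proper coloring giving the root color `c` -/
noncomputable def M (A : RG) (c : ℕ) : ℕ :=
  sInf {m | ∃ f : A.α → ℕ, IsProperColoring A.G f ∧ f A.root = c ∧ ∑ v, f v = m}

/-- minimum cost of a coloring of `B` whose root color avoids `c` -/
noncomputable def MAvoid (B : RG) (c : ℕ) : ℕ :=
  sInf {m | ∃ c', 1 ≤ c' ∧ c' ≠ c ∧ M B c' = m}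

lemma exists_proper (A : RG) (c : ℕ) (hc : 1 ≤ c) :
    ∃ f : A.α → ℕ, IsProperColoring A.G f ∧ f A.root = c := by
  classical
  let e := Fintype.equivFin A.α
  refine ⟨fun v => if v = A.root then c else c + 1 + e v, ⟨fun v => ?_, fun u v h => ?_⟩, by simp⟩
  · dsimp only
    split <;> omega
  · have hne : u ≠ v := A.G.ne_of_adj h
    dsimp only
    by_cases hu : u = A.root <;> by_cases hv : v = A.root <;> simp only [hu, hv, if_true, if_false, if_pos, if_neg, not_false_iff]
    · exact absurd (hu ▸ hv ▸ rfl : u = v) hne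
    · intro hh; omega
    · intro hh; omega
    · intro hh
      have : (e u : ℕ) = e v := by omega
      exact hne (e.injective (Fin.val_injective this))

lemma M_mem (A : RG) (c : ℕ) (hc : 1 ≤ c) :
    ∃ f : A.α → ℕ, IsProperColoring A.G f ∧ f A.root = c ∧ ∑ v, f v = M A c := by
  have hne : {m | ∃ f : A.α → ℕ, IsProperColoring A.G f ∧ f A.root = c ∧ ∑ v, f v = m}.Nonempty := by
    obtain ⟨f, hf, hr⟩ := exists_proper A c hc
    exact ⟨∑ v, f v, f, hf, hr, rfl⟩
  obtain ⟨f, hf, hr, hs⟩ := Nat.sInf_mem hne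
  exact ⟨f, hf, hr, hs⟩

lemma M_le (A : RG) (f : A.α → ℕ) (hf : IsProperColoring A.G f) :
    M A (f A.root) ≤ ∑ v, f v :=
  Nat.sInf_le ⟨f, hf, rfl, rfl⟩

lemma le_M (A : RG) (c : ℕ) (hc : 1 ≤ c) : c ≤ M A c := by
  obtain ⟨f, hf, hr, hs⟩ := M_mem A c hc
  calc c = f A.root := hr.symm
    _ ≤ ∑ v, f v := Finset.single_le_sum (fun v _ => Nat.zero_le _) (mem_univ _)
    _ = M A c := hs

lemma MAvoid_le (B : RG) (c d : ℕ) (hd : 1 ≤ d) (hdc : d ≠ c) : MAvoid B c ≤ M B d :=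
  Nat.sInf_le ⟨d, hd, hdc, rfl⟩

lemma MAvoid_mem (B : RG) (c : ℕ) :
    ∃ d, 1 ≤ d ∧ d ≠ c ∧ M B d = MAvoid B c := by
  have hne : {m | ∃ c', 1 ≤ c' ∧ c' ≠ c ∧ M B c' = m}.Nonempty := ⟨M B (c + 1), c + 1, by omega, by omega, rfl⟩
  obtain ⟨d, h1, h2, h3⟩ := Nat.sInf_mem hne
  exact ⟨d, h1, h2, h3⟩

lemma M_singl (c : ℕ) (hc : 1 ≤ c) : M singl c = c := by
  apply le_antisymm
  · exact le_trans (le_of_eq (by congr 1 : M singl c = M singl ((fun _ => c) singl.root)))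
      (le_trans (M_le singl (fun _ => c) ⟨fun _ => hc, by simp [singl]⟩) (by simp [singl]))
  · exact le_M singl c hc

lemma M_link (A B : RG) (c : ℕ) (hc : 1 ≤ c) :
    M (A.link B) c = M A c + MAvoid B c := by
  apply le_antisymm
  · obtain ⟨f, hf, hfr, hfs⟩ := M_mem A c hc
    obtain ⟨d, hd1, hdc, hdM⟩ := MAvoid_mem B c
    obtain ⟨g, hg, hgr, hgs⟩ := M_mem B d hd1
    set F : A.α ⊕ B.α → ℕ := Sum.elim f g with hF
    have hproper : IsProperColoring (A.link B).G F := by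
      rw [proper_link_iff]
      refine ⟨by simpa [hF] using hf, by simpa [hF] using hg, ?_⟩
      simp only [hF, Sum.elim_inl, Sum.elim_inr, hfr, hgr]
      exact fun h => hdc (h ▸ rfl)
    have := M_le (A.link B) F hproper
    rw [show F ((A.link B).root) = c by simp [hF, RG.link, hfr]] at this
    refine le_trans this ?_
    rw [sum_link]
    simp only [hF, Sum.elim_inl, Sum.elim_inr, hfs, hgs, hdM]
    omega
  · obtain ⟨F, hF, hFr, hFs⟩ := M_mem (A.link B) c hc
    rw [proper_link_iff] at hF
    simp only [link_root] at hFr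
    obtain ⟨hFa, hFb, hFab⟩ := hF
    rw [← hFs, sum_link]
    have h1 : M A c ≤ ∑ v : A.α, F (Sum.inl v) := by
      have := M_le A (F ∘ Sum.inl) hFa
      rwa [show (F ∘ Sum.inl) A.root = c from hFr] at this
    have h2 : MAvoid B c ≤ ∑ v : B.α, F (Sum.inr v) := by
      refine le_trans (MAvoid_le B c ((F ∘ Sum.inr) B.root) (hFb.1 _) ?_) (M_le B (F ∘ Sum.inr) hFb)
      intro h
      exact hFab (by simp only [Function.comp] at h; rw [hFr, h])
    omega


/-! ### degrees -/

noncomputable def mydeg {α : Type} [Fintype α] (G : SimpleGraph α) (v : α) : ℕ :=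
  (univ.filter (fun u => G.Adj v u)).card

lemma mydeg_singl (v : singl.α) : mydeg singl.G v = 0 := by
  simp [mydeg, singl]

lemma mydeg_link_inl (A B : RG) (v : A.α) :
    mydeg (A.link B).G (Sum.inl v) = mydeg A.G v + (if v = A.root then 1 else 0) := by
  classical
  rw [mydeg, card_filter]
  have hsplit : (∑ i : (A.link B).α, (if (A.link B).G.Adj (Sum.inl v) i then 1 else 0 : ℕ))
      = (∑ a : A.α, if (A.link B).G.Adj (Sum.inl v) (Sum.inl a) then 1 else 0)
        + (∑ b : B.α, if (A.link B).G.Adj (Sum.inl v) (Sum.inr b) then 1 else 0) :=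
    Fintype.sum_sum_type _
  rw [hsplit]
  congr 1
  · rw [mydeg, card_filter]
    apply Finset.sum_congr rfl
    intro a _
    congr 1
  · by_cases hv : v = A.root
    · subst hv
      have : ∀ b : B.α, ((A.link B).G.Adj (Sum.inl A.root) (Sum.inr b)) ↔ b = B.root := by
        intro b; simp [RG.link]
      rw [if_pos rfl]
      calc (∑ b : B.α, if (A.link B).G.Adj (Sum.inl A.root) (Sum.inr b) then 1 else 0)
          = ∑ b : B.α, if b = B.root then 1 else 0 :=
            Finset.sum_congr rfl (fun b _ => by rw [if_congr (this b) rfl rfl])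
        _ = 1 := by rw [Finset.sum_ite_eq' univ B.root (fun _ => 1)]; simp
    · rw [if_neg hv]
      have : ∀ b : B.α, ¬ ((A.link B).G.Adj (Sum.inl v) (Sum.inr b)) := by
        intro b hb
        exact hv hb.1
      calc (∑ b : B.α, if (A.link B).G.Adj (Sum.inl v) (Sum.inr b) then 1 else 0)
          = ∑ _b : B.α, (0 : ℕ) := Finset.sum_congr rfl (fun b _ => if_neg (this b))
        _ = 0 := by simp

lemma mydeg_link_inr (A B : RG) (v : B.α) :
    mydeg (A.link B).G (Sum.inr v) = mydeg B.G v + (if v = B.root then 1 else 0) := by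
  classical
  rw [mydeg, card_filter]
  have hsplit : (∑ i : (A.link B).α, (if (A.link B).G.Adj (Sum.inr v) i then 1 else 0 : ℕ))
      = (∑ a : A.α, if (A.link B).G.Adj (Sum.inr v) (Sum.inl a) then 1 else 0)
        + (∑ b : B.α, if (A.link B).G.Adj (Sum.inr v) (Sum.inr b) then 1 else 0) :=
    Fintype.sum_sum_type _
  rw [hsplit, add_comm (mydeg B.G v)]
  congr 1
  · by_cases hv : v = B.root
    · subst hv
      have : ∀ a : A.α, ((A.link B).G.Adj (Sum.inr B.root) (Sum.inl a)) ↔ a = A.root := by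
        intro a; simp [RG.link]
      rw [if_pos rfl]
      calc (∑ a : A.α, if (A.link B).G.Adj (Sum.inr B.root) (Sum.inl a) then 1 else 0)
          = ∑ a : A.α, if a = A.root then 1 else 0 :=
            Finset.sum_congr rfl (fun a _ => by rw [if_congr (this a) rfl rfl])
        _ = 1 := by rw [Finset.sum_ite_eq' univ A.root (fun _ => 1)]; simp
    · rw [if_neg hv]
      have : ∀ a : A.α, ¬ ((A.link B).G.Adj (Sum.inr v) (Sum.inl a)) := by
        intro a ha
        exact hv ha.2
      calc (∑ a : A.α, if (A.link B).G.Adj (Sum.inr v) (Sum.inl a) then 1 else 0)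
          = ∑ _a : A.α, (0 : ℕ) := Finset.sum_congr rfl (fun a _ => if_neg (this a))
        _ = 0 := by simp
  · rw [mydeg, card_filter]
    apply Finset.sum_congr rfl
    intro a _
    congr 1

/-! ### tree-ness -/

def homL (A B : RG) : A.G →g (A.link B).G where
  toFun := Sum.inl
  map_rel' := fun h => h

def homR (A B : RG) : B.G →g (A.link B).G where
  toFun := Sum.inr
  map_rel' := fun h => h

lemma link_connected (A B : RG) (hA : A.G.Connected) (hB : B.G.Connected) :
    (A.link B).G.Connected := by
  have hcross : (A.link B).G.Adj (Sum.inl A.root) (Sum.inr B.root) := ⟨rfl, rfl⟩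
  haveI : Nonempty ((A.link B).α) := ⟨Sum.inl A.root⟩
  refine ⟨fun x y => ?_⟩
  have key : ∀ z : A.α ⊕ B.α, (A.link B).G.Reachable z (Sum.inl A.root) := by
    rintro (a | b)
    · exact (hA.preconnected a A.root).map (homL A B)
    · exact ((hB.preconnected b B.root).map (homR A B)).trans hcross.symm.reachable
  exact (key x).trans (key y).symm

lemma cross_edge_mem (A B : RG) : ∀ {x y : A.α ⊕ B.α} (w : (A.link B).G.Walk x y),
    x.isLeft → y.isRight → s(Sum.inl A.root, Sum.inr B.root) ∈ w.edges := by
  intro x y w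
  induction w with
  | nil =>
    intro h1 h2
    obtain ⟨a, rfl⟩ := Sum.isLeft_iff.mp h1
    simp at h2
  | @cons x u y h p ih =>
    intro h1 h2
    rcases x with a | b
    · rcases u with a' | b'
      · rw [SimpleGraph.Walk.edges_cons]
        exact List.mem_cons_of_mem _ (ih rfl h2)
      · obtain ⟨rfl, rfl⟩ := h
        exact List.mem_cons_self
    · simp at h1

lemma proj_walkL (A B : RG) : ∀ {x y : A.α ⊕ B.α} (w : (A.link B).G.Walk x y),
    ∃ q : A.G.Walk (Sum.elim id (fun _ => A.root) x) (Sum.elim id (fun _ => A.root) y),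
      ∀ u v : A.α, s(u, v) ∈ q.edges → s(Sum.inl u, Sum.inl v) ∈ w.edges := by
  intro x y w
  induction w with
  | nil => exact ⟨.nil, fun u v hm => absurd hm (by simp)⟩
  | @cons x z y h p ih =>
    obtain ⟨q, hq⟩ := ih
    rcases x with a | b <;> rcases z with a' | b'
    · refine ⟨.cons (show A.G.Adj a a' from h) q, ?_⟩
      intro u v hm
      change s(u, v) ∈ s(a, a') :: q.edges at hm
      change s(Sum.inl u, Sum.inl v) ∈ s(Sum.inl a, Sum.inl a') :: p.edges
      rcases List.mem_cons.mp hm with hm | hm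
      · rcases Sym2.eq_iff.mp hm with ⟨rfl, rfl⟩ | ⟨rfl, rfl⟩
        · exact List.mem_cons_self
        · exact List.mem_cons.mpr (Or.inl Sym2.eq_swap)
      · exact List.mem_cons_of_mem _ (hq u v hm)
    · obtain ⟨rfl, rfl⟩ := h
      exact ⟨q, fun u v hm => List.mem_cons_of_mem _ (hq u v hm)⟩
    · obtain ⟨rfl, rfl⟩ := h
      exact ⟨q, fun u v hm => List.mem_cons_of_mem _ (hq u v hm)⟩
    · exact ⟨q, fun u v hm => List.mem_cons_of_mem _ (hq u v hm)⟩

lemma proj_walkR (A B : RG) : ∀ {x y : A.α ⊕ B.α} (w : (A.link B).G.Walk x y),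
    ∃ q : B.G.Walk (Sum.elim (fun _ => B.root) id x) (Sum.elim (fun _ => B.root) id y),
      ∀ u v : B.α, s(u, v) ∈ q.edges → s(Sum.inr u, Sum.inr v) ∈ w.edges := by
  intro x y w
  induction w with
  | nil => exact ⟨.nil, fun u v hm => absurd hm (by simp)⟩
  | @cons x z y h p ih =>
    obtain ⟨q, hq⟩ := ih
    rcases x with a | b <;> rcases z with a' | b'
    · exact ⟨q, fun u v hm => List.mem_cons_of_mem _ (hq u v hm)⟩
    · obtain ⟨rfl, rfl⟩ := h
      exact ⟨q, fun u v hm => List.mem_cons_of_mem _ (hq u v hm)⟩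
    · obtain ⟨rfl, rfl⟩ := h
      exact ⟨q, fun u v hm => List.mem_cons_of_mem _ (hq u v hm)⟩
    · refine ⟨.cons (show B.G.Adj b b' from h) q, ?_⟩
      intro u v hm
      change s(u, v) ∈ s(b, b') :: q.edges at hm
      change s(Sum.inr u, Sum.inr v) ∈ s(Sum.inr b, Sum.inr b') :: p.edges
      rcases List.mem_cons.mp hm with hm | hm
      · rcases Sym2.eq_iff.mp hm with ⟨rfl, rfl⟩ | ⟨rfl, rfl⟩
        · exact List.mem_cons_self
        · exact List.mem_cons.mpr (Or.inl Sym2.eq_swap)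
      · exact List.mem_cons_of_mem _ (hq u v hm)

lemma link_acyclic (A B : RG) (hA : A.G.IsAcyclic) (hB : B.G.IsAcyclic) :
    (A.link B).G.IsAcyclic := by
  rw [SimpleGraph.isAcyclic_iff_forall_adj_isBridge]
  rintro (u | u) (v | v) h
  · rw [SimpleGraph.isBridge_iff_adj_and_forall_walk_mem_edges]
    refine fun w => ?_
    obtain ⟨q, hq⟩ := proj_walkL A B w
    have hb := (SimpleGraph.isAcyclic_iff_forall_adj_isBridge.mp hA) (show A.G.Adj u v from h)
    rw [SimpleGraph.isBridge_iff_adj_and_forall_walk_mem_edges] at hb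
    exact hq u v (hb q)
  · obtain ⟨rfl, rfl⟩ := h
    rw [SimpleGraph.isBridge_iff_adj_and_forall_walk_mem_edges]
    exact fun w => cross_edge_mem A B w rfl rfl
  · obtain ⟨rfl, rfl⟩ := h
    rw [Sym2.eq_swap, SimpleGraph.isBridge_iff_adj_and_forall_walk_mem_edges]
    exact fun w => cross_edge_mem A B w rfl rfl
  · rw [SimpleGraph.isBridge_iff_adj_and_forall_walk_mem_edges]
    refine fun w => ?_
    obtain ⟨q, hq⟩ := proj_walkR A B w
    have hb := (SimpleGraph.isAcyclic_iff_forall_adj_isBridge.mp hB) (show B.G.Adj u v from h)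
    rw [SimpleGraph.isBridge_iff_adj_and_forall_walk_mem_edges] at hb
    exact hq u v (hb q)

lemma singl_isTree : singl.G.IsTree := by
  constructor
  · haveI : Nonempty singl.α := ⟨PUnit.unit⟩
    exact ⟨fun x y => by cases x; cases y; exact SimpleGraph.Reachable.refl _⟩
  · intro v c hc
    cases c with
    | nil => exact absurd rfl hc.ne_nil
    | cons h p => exact h.elim

lemma link_isTree (A B : RG) (hA : A.G.IsTree) (hB : B.G.IsTree) : (A.link B).G.IsTree :=
  ⟨link_connected A B hA.1 hB.1, link_acyclic A B hA.2 hB.2⟩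

/-! ### the family -/

def q (c p x : ℕ) : ℕ := (p + c - x + 1) / 2

def meas (c p : ℕ) : ℕ := (c + p) * (c + p) + p

def attachC (c : ℕ) (child : ℕ → RG) : ℕ → RG
  | 0 => singl
  | k + 1 =>
    if k + 1 = c then attachC c child k
    else ((attachC c child k).link (child (k + 1))).link (child (k + 1))

def TT : ℕ → ℕ → ℕ → RG
  | 0, _, _ => singl
  | fuel + 1, c, p => attachC c (fun x => TT fuel x (q c p x)) (c + p - 1)

lemma q_pos (c p x : ℕ) (hp : 1 ≤ p) (hx2 : x ≤ c + p - 1) : 1 ≤ q c p x := by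
  unfold q; omega

lemma q_add_le (c p x : ℕ) (hp : 1 ≤ p) (hx1 : 1 ≤ x) (hx2 : x ≤ c + p - 1) :
    x + q c p x ≤ c + p := by
  unfold q; omega

lemma q_pen (c p x : ℕ) (hp : 1 ≤ p) (hx2 : x ≤ c + p - 1) :
    p + c ≤ 2 * q c p x + x := by
  unfold q; omega

lemma q_p1 (c x : ℕ) (hx1 : 1 ≤ x) (hx2 : x ≤ c - 1) : x + q c 1 x ≤ c := by
  unfold q; omega

lemma meas_lt (c p x : ℕ) (hc : 1 ≤ c) (hp : 1 ≤ p) (hx1 : 1 ≤ x)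
    (hx2 : x ≤ c + p - 1) (hxc : x ≠ c) : meas x (q c p x) < meas c p := by
  have h2 : x + q c p x ≤ c + p := q_add_le c p x hp hx1 hx2
  rcases Nat.lt_or_ge (x + q c p x) (c + p) with hlt | hge
  · have hq : q c p x ≤ c + p := by unfold q; omega
    have hmul : (x + q c p x) * (x + q c p x) ≤ (c + p - 1) * (c + p - 1) :=
      Nat.mul_le_mul (by omega) (by omega)
    have hs : 2 ≤ c + p := by omega
    have hexp : (c + p - 1) * (c + p - 1) + 2 * (c + p) = (c + p) * (c + p) + 1 := by
      rcases Nat.exists_eq_add_of_le hs with ⟨t, ht⟩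
      rw [ht]
      have h1 : 2 + t - 1 = t + 1 := by omega
      rw [h1]
      ring
    unfold meas
    omega
  · have heq : x + q c p x = c + p := le_antisymm h2 hge
    have hqlt : q c p x < p := by unfold q at heq ⊢; omega
    unfold meas
    rw [heq]
    omega

lemma filter_Icc_succ (k c : ℕ) :
    ((Finset.Icc 1 (k + 1)).filter (· ≠ c)).card
      = ((Finset.Icc 1 k).filter (· ≠ c)).card + (if k + 1 = c then 0 else 1) := by
  classical
  have h : Finset.Icc 1 (k + 1) = insert (k + 1) (Finset.Icc 1 k) := by
    ext x
    simp only [Finset.mem_Icc, Finset.mem_insert]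
    omega
  rw [h, Finset.filter_insert]
  by_cases hc : k + 1 = c
  · rw [if_neg (by simpa using hc), if_pos hc, Nat.add_zero]
  · rw [if_pos (by simpa using hc), if_neg hc]
    rw [Finset.card_insert_of_notMem (by simp [Finset.mem_Icc])]

lemma card_filter_final (c p : ℕ) (hc : 1 ≤ c) (hp : 1 ≤ p) :
    ((Finset.Icc 1 (c + p - 1)).filter (· ≠ c)).card + 2 = c + p := by
  classical
  rw [Finset.filter_ne' (Finset.Icc 1 (c + p - 1)) c,
    Finset.card_erase_of_mem (by simp [Finset.mem_Icc]; omega), Nat.card_Icc]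
  omega

/-! ### the inner induction: building a star of children around a root -/

theorem inner (c p : ℕ) (hc : 1 ≤ c) (hp : 1 ≤ p) (child : ℕ → RG)
    (hch : ∀ x, 1 ≤ x → x ≤ c + p - 1 → x ≠ c →
      (child x).G.IsTree ∧
      (∀ y, 1 ≤ y → y ≠ x → M (child x) x + q c p x ≤ M (child x) y) ∧
      (∃ g, IsProperColoring (child x).G g ∧ g (child x).root = x ∧
        (∑ v, g v) = M (child x) x ∧ ∀ v, g v + 1 ≤ x + q c p x) ∧
      (mydeg (child x).G (child x).root + 4 = 2 * (x + q c p x)) ∧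
      (∀ v, v ≠ (child x).root → mydeg (child x).G v + 3 ≤ 2 * (x + q c p x))) :
    ∀ k, k ≤ c + p - 1 →
      (attachC c child k).G.IsTree ∧
      (∀ x, 1 ≤ x → M (attachC c child k) c + x ≤ M (attachC c child k) x + c) ∧
      (∀ x, 1 ≤ x → x ≤ k → x ≠ c →
        M (attachC c child k) c + x + 2 * q c p x ≤ M (attachC c child k) x + c) ∧
      (∃ f, IsProperColoring (attachC c child k).G f ∧ f (attachC c child k).root = c ∧
        (∑ v, f v) = M (attachC c child k) c ∧ ∀ v, f v = c ∨ f v + 1 ≤ c + p) ∧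
      (∀ f, IsProperColoring (attachC c child k).G f → f (attachC c child k).root = c →
        (∑ v, f v) = M (attachC c child k) c → ∀ x, 1 ≤ x → x ≤ k → x ≠ c → ∃ v, f v = x) ∧
      (mydeg (attachC c child k).G (attachC c child k).root
        = 2 * ((Finset.Icc 1 k).filter (· ≠ c)).card) ∧
      (∀ v, v ≠ (attachC c child k).root → mydeg (attachC c child k).G v + 3 ≤ 2 * (c + p)) ∧
      (p = 1 → ∀ v, v ≠ (attachC c child k).root → mydeg (attachC c child k).G v + 3 ≤ 2 * c) := by
  intro k
  induction k with
  | zero =>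
    intro _
    have h0 : attachC c child 0 = singl := rfl
    rw [h0]
    refine ⟨singl_isTree, ?_, ?_, ?_, ?_, ?_, ?_, ?_⟩
    · intro x hx
      rw [M_singl c hc, M_singl x hx, Nat.add_comm]
    · intro x _ hx0 _
      omega
    · refine ⟨fun _ => c, ⟨fun _ => hc, ?_⟩, rfl, ?_, fun _ => Or.inl rfl⟩
      · intro u v h
        exact h.elim
      · rw [M_singl c hc]
        simp [singl]
    · intro f _ _ _ x _ hx0 _
      omega
    · rw [Finset.Icc_eq_empty (by omega)]
      rw [mydeg_singl]
      simp
    · intro v hv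
      exact absurd (Subsingleton.elim v _) hv
    · intro _ v hv
      exact absurd (Subsingleton.elim v _) hv
  | succ k ihk =>
    intro hk1
    have hkle : k ≤ c + p - 1 := by omega
    obtain ⟨iT, i1, i2, i3, i4, i5, i6, i7⟩ := ihk hkle
    by_cases hkc : k + 1 = c
    · have hB : attachC c child (k + 1) = attachC c child k := by
        rw [attachC, if_pos hkc]
      rw [hB]
      refine ⟨iT, i1, ?_, i3, ?_, ?_, i6, i7⟩
      · intro x hx hxk hxc
        exact i2 x hx (by omega) hxc
      · intro f hf hfr hfs x hx hxk hxc
        exact i4 f hf hfr hfs x hx (by omega) hxc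
      · rw [filter_Icc_succ, if_pos hkc, Nat.add_zero, i5]
    · -- the real case: two copies of child (k+1) get attached
      have hB : attachC c child (k + 1)
          = ((attachC c child k).link (child (k + 1))).link (child (k + 1)) := by
        rw [attachC, if_neg hkc]
      rw [hB]
      obtain ⟨chT, chF1, chF3, chD1, chD2⟩ := hch (k + 1) (by omega) (by omega) hkc
      set Bk := attachC c child k with hBk
      set ch := child (k + 1) with hch1
      set m := M ch (k + 1) with hm
      set qk := q c p (k + 1) with hqk
      have hqk1 : 1 ≤ qk := q_pos c p (k + 1) hp (by omega)
      have hsk : k + 1 + qk ≤ c + p := q_add_le c p (k + 1) hp (by omega) (by omega)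
      have hMch_ge : ∀ d, 1 ≤ d → m ≤ M ch d := by
        intro d hd
        by_cases hdk : d = k + 1
        · rw [hdk]
        · have := chF1 d hd hdk
          omega
      have hAv1 : ∀ y, 1 ≤ y → y ≠ k + 1 → MAvoid ch y = m := by
        intro y hy hyk
        apply le_antisymm
        · exact MAvoid_le ch y (k + 1) (by omega) (fun h => hyk h.symm)
        · obtain ⟨d, hd1, hdy, hdM⟩ := MAvoid_mem ch y
          rw [← hdM]
          exact hMch_ge d hd1
      have hAv2 : ∀ y, m ≤ MAvoid ch y := by
        intro y
        obtain ⟨d, hd1, hdy, hdM⟩ := MAvoid_mem ch y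
        rw [← hdM]
        exact hMch_ge d hd1
      have hAv3 : m + qk ≤ MAvoid ch (k + 1) := by
        obtain ⟨d, hd1, hdy, hdM⟩ := MAvoid_mem ch (k + 1)
        rw [← hdM]
        exact chF1 d hd1 hdy
      have hM : ∀ y, 1 ≤ y →
          M ((Bk.link ch).link ch) y = M Bk y + 2 * MAvoid ch y := by
        intro y hy
        rw [M_link _ _ y hy, M_link _ _ y hy]
        ring
      have hAvc : MAvoid ch c = m := hAv1 c hc (fun h => hkc h.symm)
      refine ⟨?_, ?_, ?_, ?_, ?_, ?_, ?_, ?_⟩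
      · exact link_isTree _ _ (link_isTree _ _ iT chT) chT
      · intro x hx
        rw [hM x hx, hM c hc, hAvc]
        have := i1 x hx
        have := hAv2 x
        omega
      · intro x hx hxk hxc
        rw [hM x hx, hM c hc, hAvc]
        by_cases hxk1 : x = k + 1
        · subst hxk1
          have := i1 (k + 1) hx
          have := hAv3
          omega
        · rw [hAv1 x hx hxk1]
          have := i2 x hx (by omega) hxc
          omega
      · -- canonical coloring
        obtain ⟨f0, hf0p, hf0r, hf0s, hf0b⟩ := i3
        obtain ⟨g, hgp, hgr, hgs, hgb⟩ := chF3
        refine ⟨Sum.elim (Sum.elim f0 g) g, ?_, ?_, ?_, ?_⟩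
        · rw [proper_link_iff]
          refine ⟨?_, hgp, ?_⟩
          · rw [show (Sum.elim (Sum.elim f0 g) g ∘ Sum.inl) = Sum.elim f0 g from rfl,
              proper_link_iff]
            refine ⟨hf0p, hgp, ?_⟩
            simp only [Sum.elim_inl, Sum.elim_inr, hf0r, hgr]
            exact fun h => hkc h.symm
          · simp only [link_root, Sum.elim_inl, Sum.elim_inr, hf0r, hgr]
            exact fun h => hkc h.symm
        · simp only [link_root, Sum.elim_inl, hf0r]
        · rw [hM c hc, hAvc, sum_link, sum_link]
          simp only [Sum.elim_inl, Sum.elim_inr]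
          rw [hf0s, hgs]
          ring
        · rintro ((v | v) | v)
          · exact hf0b v
          · right
            have := hgb v
            simp only [Sum.elim_inl, Sum.elim_inr]
            omega
          · right
            have := hgb v
            simp only [Sum.elim_inr]
            omega
      · -- forcing
        intro f hf hfr hfs x hx hxk hxc
        rw [hM c hc, hAvc] at hfs
        rw [proper_link_iff] at hf
        obtain ⟨hfL, hg2, hcross2⟩ := hf
        rw [proper_link_iff] at hfL
        obtain ⟨hf0, hg1, hcross1⟩ := hfL
        simp only [link_root] at hfr hcross2
        rw [sum_link, sum_link] at hfs
        have hS0 : M Bk c ≤ ∑ v : Bk.α, f (Sum.inl (Sum.inl v)) := by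
          have h1 := M_le Bk ((f ∘ Sum.inl) ∘ Sum.inl) hf0
          rw [show ((f ∘ Sum.inl) ∘ Sum.inl) Bk.root = c from hfr] at h1
          exact h1
        have hd1pos : 1 ≤ ((f ∘ Sum.inl) ∘ Sum.inr) ch.root := hg1.1 _
        have hd2pos : 1 ≤ (f ∘ Sum.inr) ch.root := hg2.1 _
        have hS1 : M ch (((f ∘ Sum.inl) ∘ Sum.inr) ch.root)
            ≤ ∑ v : ch.α, f (Sum.inl (Sum.inr v)) := M_le ch _ hg1
        have hS2 : M ch ((f ∘ Sum.inr) ch.root)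
            ≤ ∑ v : ch.α, f (Sum.inr v) := M_le ch _ hg2
        have hm1 : m ≤ M ch (((f ∘ Sum.inl) ∘ Sum.inr) ch.root) := hMch_ge _ hd1pos
        have hm2 : m ≤ M ch ((f ∘ Sum.inr) ch.root) := hMch_ge _ hd2pos
        -- equality forcing
        have hE0 : ∑ v : Bk.α, f (Sum.inl (Sum.inl v)) = M Bk c := by omega
        have hE1 : M ch (((f ∘ Sum.inl) ∘ Sum.inr) ch.root) = m := by omega
        by_cases hxk1 : x = k + 1
        · -- the first child root must be colored k+1
          subst hxk1
          refine ⟨Sum.inl (Sum.inr ch.root), ?_⟩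
          by_contra hne
          have := chF1 (((f ∘ Sum.inl) ∘ Sum.inr) ch.root) hd1pos (fun h => hne h)
          omega
        · obtain ⟨v, hv⟩ := i4 ((f ∘ Sum.inl) ∘ Sum.inl) hf0 hfr hE0 x hx (by omega) hxc
          exact ⟨Sum.inl (Sum.inl v), hv⟩
      · -- root degree
        rw [link_root, mydeg_link_inl, link_root, mydeg_link_inl]
        rw [if_pos rfl, if_pos rfl]
        rw [filter_Icc_succ, if_neg hkc, i5]
        ring
      · -- other degrees
        rintro ((w | b) | b) hv
        · simp only [link_root] at hv
          have hw : w ≠ Bk.root := fun h => hv (by rw [h])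
          rw [mydeg_link_inl, mydeg_link_inl, if_neg hw]
          simp only [link_root]
          rw [if_neg (fun h => hw (Sum.inl.inj h))]
          have := i6 w hw
          omega
        · rw [mydeg_link_inl, mydeg_link_inr]
          simp only [link_root]
          rw [if_neg Sum.inr_ne_inl]
          by_cases hb : b = ch.root
          · subst hb
            rw [if_pos rfl]
            omega
          · rw [if_neg hb]
            have := chD2 b hb
            omega
        · rw [mydeg_link_inr]
          by_cases hb : b = ch.root
          · subst hb
            rw [if_pos rfl]
            omega
          · rw [if_neg hb]
            have := chD2 b hb
            omega
      · -- degrees in the p = 1 case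
        intro hp1
        have hsk1 : k + 1 + qk ≤ c := by
          subst hp1
          exact q_p1 c (k + 1) (by omega) (by omega)
        rintro ((w | b) | b) hv
        · simp only [link_root] at hv
          have hw : w ≠ Bk.root := fun h => hv (by rw [h])
          rw [mydeg_link_inl, mydeg_link_inl, if_neg hw]
          simp only [link_root]
          rw [if_neg (fun h => hw (Sum.inl.inj h))]
          have := i7 hp1 w hw
          omega
        · rw [mydeg_link_inl, mydeg_link_inr]
          simp only [link_root]
          rw [if_neg Sum.inr_ne_inl]
          by_cases hb : b = ch.root
          · subst hb
            rw [if_pos rfl]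
            omega
          · rw [if_neg hb]
            have := chD2 b hb
            omega
        · rw [mydeg_link_inr]
          by_cases hb : b = ch.root
          · subst hb
            rw [if_pos rfl]
            omega
          · rw [if_neg hb]
            have := chD2 b hb
            omega

/-! ### the master theorem about the family `TT` -/

theorem master : ∀ (fuel : ℕ) (c p : ℕ), 1 ≤ c → 1 ≤ p → meas c p ≤ fuel →
    (TT fuel c p).G.IsTree ∧
    (∀ y, 1 ≤ y → y ≠ c → M (TT fuel c p) c + p ≤ M (TT fuel c p) y) ∧
    (∃ g, IsProperColoring (TT fuel c p).G g ∧ g (TT fuel c p).root = c ∧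
      (∑ v, g v) = M (TT fuel c p) c ∧ ∀ v, g v + 1 ≤ c + p) ∧
    (mydeg (TT fuel c p).G (TT fuel c p).root + 4 = 2 * (c + p)) ∧
    (∀ v, v ≠ (TT fuel c p).root → mydeg (TT fuel c p).G v + 3 ≤ 2 * (c + p)) ∧
    (∀ f, IsProperColoring (TT fuel c p).G f → (∑ v, f v) = M (TT fuel c p) c →
      ∀ x, 1 ≤ x → x + 1 ≤ c + p → ∃ v, f v = x) ∧
    (p = 1 → ∀ v, v ≠ (TT fuel c p).root → mydeg (TT fuel c p).G v + 3 ≤ 2 * c) := by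
  intro fuel
  induction fuel with
  | zero =>
    intro c p hc hp hm
    exfalso
    unfold meas at hm
    omega
  | succ fuel ih =>
    intro c p hc hp hmeas
    have hTT : TT (fuel + 1) c p = attachC c (fun x => TT fuel x (q c p x)) (c + p - 1) := rfl
    rw [hTT]
    have hchild : ∀ x, 1 ≤ x → x ≤ c + p - 1 → x ≠ c →
        (TT fuel x (q c p x)).G.IsTree ∧
        (∀ y, 1 ≤ y → y ≠ x →
          M (TT fuel x (q c p x)) x + q c p x ≤ M (TT fuel x (q c p x)) y) ∧
        (∃ g, IsProperColoring (TT fuel x (q c p x)).G g ∧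
          g (TT fuel x (q c p x)).root = x ∧
          (∑ v, g v) = M (TT fuel x (q c p x)) x ∧ ∀ v, g v + 1 ≤ x + q c p x) ∧
        (mydeg (TT fuel x (q c p x)).G (TT fuel x (q c p x)).root + 4 = 2 * (x + q c p x)) ∧
        (∀ v, v ≠ (TT fuel x (q c p x)).root →
          mydeg (TT fuel x (q c p x)).G v + 3 ≤ 2 * (x + q c p x)) := by
      intro x h1 h2 h3
      have hq1 : 1 ≤ q c p x := q_pos c p x hp h2
      have hm' : meas x (q c p x) ≤ fuel := by
        have := meas_lt c p x hc hp h1 h2 h3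
        omega
      obtain ⟨a, b, c', d, e, _, _⟩ := ih x (q c p x) h1 hq1 hm'
      exact ⟨a, b, c', d, e⟩
    obtain ⟨I0, I1, I2, I3, I4, I5, I6, I7⟩ :=
      inner c p hc hp (fun x => TT fuel x (q c p x)) hchild (c + p - 1) le_rfl
    set A := attachC c (fun x => TT fuel x (q c p x)) (c + p - 1) with hA
    have hF1 : ∀ y, 1 ≤ y → y ≠ c → M A c + p ≤ M A y := by
      intro y hy hyc
      by_cases hyle : y ≤ c + p - 1
      · have h1 := I2 y hy hyle hyc
        have h2 := q_pen c p y hp hyle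
        omega
      · have := I1 y hy
        omega
    have hF2 : ∀ f, IsProperColoring A.G f → (∑ v, f v) = M A c →
        ∀ x, 1 ≤ x → x + 1 ≤ c + p → ∃ v, f v = x := by
      intro f hf hfs x hx hxle
      have hroot : f A.root = c := by
        by_contra hne
        have h1 := M_le A f hf
        have h2 := hF1 (f A.root) (hf.1 _) hne
        omega
      by_cases hxc : x = c
      · exact ⟨A.root, by rw [hroot, hxc]⟩
      · exact I4 f hf hroot hfs x hx (by omega) hxc
    have hF3 : ∃ g, IsProperColoring A.G g ∧ g A.root = c ∧
        (∑ v, g v) = M A c ∧ ∀ v, g v + 1 ≤ c + p := by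
      obtain ⟨f, hfp, hfr, hfs, hfb⟩ := I3
      refine ⟨f, hfp, hfr, hfs, fun v => ?_⟩
      rcases hfb v with h | h
      · omega
      · omega
    have hD1 : mydeg A.G A.root + 4 = 2 * (c + p) := by
      have := card_filter_final c p hc hp
      omega
    exact ⟨I0, hF1, hF3, hD1, I6, hF2, I7⟩

theorem assemble (i : ℕ) (hi : 1 ≤ i) (A : RG)
    (hTree : A.G.IsTree)
    (hF1 : ∀ y, 1 ≤ y → y ≠ i → M A i + 1 ≤ M A y)
    (g : A.α → ℕ) (hgp : IsProperColoring A.G g)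
    (hgs : (∑ v, g v) = M A i) (hgb : ∀ v, g v + 1 ≤ i + 1)
    (hD1 : mydeg A.G A.root + 4 = 2 * (i + 1))
    (hF2 : ∀ f, IsProperColoring A.G f → (∑ v, f v) = M A i →
      ∀ x, 1 ≤ x → x + 1 ≤ i + 1 → ∃ v, f v = x)
    (hp1 : ∀ v, v ≠ A.root → mydeg A.G v + 3 ≤ 2 * i) :
    ∃ (n : ℕ) (T : SimpleGraph (Fin n)), T.IsTree ∧ strength T = i ∧
      @SimpleGraph.maxDegree (Fin n) T _ (Classical.decRel _) = 2 * i - 2 := by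
  classical
  set n := Fintype.card A.α with hn
  set e : A.α ≃ Fin n := Fintype.equivFin A.α with he
  set T : SimpleGraph (Fin n) :=
    { Adj := fun x y => A.G.Adj (e.symm x) (e.symm y),
      symm := ⟨fun x y h => A.G.adj_symm h⟩,
      loopless := ⟨fun x h => A.G.loopless.irrefl _ h⟩ } with hT
  have hTadj : ∀ x y, T.Adj x y ↔ A.G.Adj (e.symm x) (e.symm y) := fun _ _ => Iff.rfl
  have hproper : ∀ f : Fin n → ℕ, IsProperColoring T f ↔ IsProperColoring A.G (f ∘ e) := by
    intro f
    constructor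
    · rintro ⟨h1, h2⟩
      refine ⟨fun v => h1 _, fun u v h => ?_⟩
      have hadj : T.Adj (e u) (e v) := by
        rw [hTadj]
        simpa using h
      exact h2 hadj
    · rintro ⟨h1, h2⟩
      refine ⟨fun v => ?_, fun u v h => ?_⟩
      · simpa using h1 (e.symm v)
      · have := h2 (show A.G.Adj (e.symm (e (e.symm u))) (e.symm (e (e.symm v))) by simpa using h)
        simpa using this
  have hsum : ∀ f : Fin n → ℕ, ∑ x, f x = ∑ v, (f ∘ e) v := fun f => (Equiv.sum_comp e f).symm
  have hcomp : (g ∘ e.symm) ∘ e = g := by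
    funext v
    simp
  have hMmin : ∀ y, 1 ≤ y → M A i ≤ M A y := by
    intro y hy
    by_cases h : y = i
    · rw [h]
    · have := hF1 y hy h
      omega
  have hgmem : IsProperColoring T (g ∘ e.symm) ∧ (∑ x, (g ∘ e.symm) x) = M A i := by
    constructor
    · rw [hproper, hcomp]
      exact hgp
    · rw [hsum, hcomp]
      exact hgs
  have hchrom : chromSum T = M A i := by
    simp only [chromSum]
    apply le_antisymm
    · exact Nat.sInf_le (Set.mem_setOf.mpr ⟨g ∘ e.symm, hgmem.1, hgmem.2⟩)
    · apply le_csInf ⟨_, Set.mem_setOf.mpr ⟨g ∘ e.symm, hgmem.1, rfl⟩⟩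
      rintro s ⟨f, hf, rfl⟩
      have hfA := (hproper f).mp hf
      have h1 := M_le A (f ∘ e) hfA
      have h2 := hMmin ((f ∘ e) A.root) (hfA.1 _)
      rw [hsum f]
      omega
  have himg_g : (univ.image (g ∘ e.symm)) = Finset.Icc 1 i := by
    have himg : univ.image (g ∘ e.symm) = univ.image g := by
      rw [← Finset.image_image, Finset.image_univ_equiv]
    rw [himg]
    apply Finset.ext
    intro x
    simp only [Finset.mem_image, Finset.mem_univ, true_and, Finset.mem_Icc]
    constructor
    · rintro ⟨v, rfl⟩
      exact ⟨hgp.1 v, by have := hgb v; omega⟩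
    · rintro ⟨h1, h2⟩
      exact hF2 g hgp hgs x h1 (by omega)
  have hstrength : strength T = i := by
    have hmem : i ∈ {nn | ∃ f, IsProperColoring T f ∧ (∑ v, f v) = chromSum T ∧
        (univ.image f).card = nn} := by
      refine ⟨g ∘ e.symm, hgmem.1, by rw [hgmem.2, hchrom], ?_⟩
      rw [himg_g, Nat.card_Icc]
      omega
    simp only [strength]
    refine le_antisymm (Nat.sInf_le hmem) (le_csInf ⟨i, hmem⟩ ?_)
    rintro nn ⟨f, hf, hfs, rfl⟩
    have hfA := (hproper f).mp hf
    have hsub : Finset.Icc 1 i ⊆ univ.image f := by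
      intro x hx
      rw [Finset.mem_Icc] at hx
      obtain ⟨v, hv⟩ := hF2 (f ∘ e) hfA (by rw [← hsum f, hfs, hchrom]) x hx.1 (by omega)
      exact Finset.mem_image.mpr ⟨e v, mem_univ _, hv⟩
    calc i = (Finset.Icc 1 i).card := by rw [Nat.card_Icc]; omega
      _ ≤ _ := Finset.card_le_card hsub
  -- tree-ness
  have hconn : T.Connected := by
    haveI : Nonempty (Fin n) := ⟨e A.root⟩
    refine ⟨fun x y => ?_⟩
    let φ : A.G →g T := ⟨e, by intro a b h; rw [hTadj]; simpa using h⟩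
    have hr := (hTree.1.preconnected (e.symm x) (e.symm y)).map φ
    have hφ : ∀ v, φ v = e v := fun _ => rfl
    rw [hφ, hφ] at hr
    simpa using hr
  have hacyc : T.IsAcyclic := by
    rw [SimpleGraph.isAcyclic_iff_forall_adj_isBridge]
    intro x y h
    rw [SimpleGraph.isBridge_iff_adj_and_forall_walk_mem_edges]
    refine fun w => ?_
    let ψ : T →g A.G := ⟨e.symm, fun hadj => hadj⟩
    have hb := (SimpleGraph.isAcyclic_iff_forall_adj_isBridge.mp hTree.2)
      (show A.G.Adj (e.symm x) (e.symm y) from h)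
    rw [SimpleGraph.isBridge_iff_adj_and_forall_walk_mem_edges] at hb
    have hmem := hb (w.map ψ)
    rw [SimpleGraph.Walk.edges_map] at hmem
    obtain ⟨ee, hee, heq⟩ := List.mem_map.mp hmem
    induction ee using Sym2.ind with
    | _ u v =>
      have heq' : s(e.symm u, e.symm v) = s(e.symm x, e.symm y) := heq
      rcases Sym2.eq_iff.mp heq' with ⟨h1, h2⟩ | ⟨h1, h2⟩
      · have hu : u = x := e.symm.injective h1
        have hv : v = y := e.symm.injective h2
        rwa [hu, hv] at hee
      · have hu : u = y := e.symm.injective h1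
        have hv : v = x := e.symm.injective h2
        rw [hu, hv] at hee
        rwa [Sym2.eq_swap]
  -- degrees
  letI dinst : DecidableRel T.Adj := Classical.decRel _
  have hdeg : ∀ x : Fin n, T.degree x = mydeg A.G (e.symm x) := by
    intro x
    rw [← SimpleGraph.card_neighborFinset_eq_degree, SimpleGraph.neighborFinset_eq_filter]
    unfold mydeg
    apply Finset.card_bij (fun (b : Fin n) _ => e.symm b)
    · intro b hb
      rw [Finset.mem_filter] at hb ⊢
      exact ⟨mem_univ _, hb.2⟩
    · intro a ha b hb hab
      exact e.symm.injective hab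
    · intro u hu
      rw [Finset.mem_filter] at hu
      refine ⟨e u, Finset.mem_filter.mpr ⟨mem_univ _, ?_⟩, by simp⟩
      show A.G.Adj (e.symm x) (e.symm (e u))
      simpa using hu.2
  have hroot_eq : e.symm (e A.root) = A.root := Equiv.symm_apply_apply _ _
  have hmax : T.maxDegree = 2 * i - 2 := by
    apply le_antisymm
    · apply SimpleGraph.maxDegree_le_of_forall_degree_le
      intro x
      rw [hdeg x]
      by_cases hx : e.symm x = A.root
      · rw [hx]
        omega
      · have := hp1 (e.symm x) hx
        omega
    · have h := SimpleGraph.degree_le_maxDegree (G := T) (e A.root)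
      rw [hdeg (e A.root), hroot_eq] at h
      omega
  exact ⟨n, T, ⟨hconn, hacyc⟩, hstrength, hmax⟩

end TS

/-- For each `i ≥ 1` there is a tree with strength `i` and maximum degree `2i-2`. -/
theorem exists_tree_strength_maxDegree (i : ℕ) (hi : 1 ≤ i) :
    ∃ (n : ℕ) (T : SimpleGraph (Fin n)), T.IsTree ∧ strength T = i ∧
      @SimpleGraph.maxDegree (Fin n) T _ (Classical.decRel _) = 2 * i - 2 := by
  obtain ⟨hTree, hF1, ⟨g, hgp, hgr, hgs, hgb⟩, hD1, hD2, hF2, hp1⟩ :=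
    TS.master (TS.meas i 1) i 1 hi le_rfl le_rfl
  exact TS.assemble i hi (TS.TT (TS.meas i 1) i 1) hTree
    (fun y hy hyi => hF1 y hy hyi) g hgp hgs hgb hD1 hF2 (hp1 rfl)
end

section
/- Let f' be a proper coloring of a rooted tree T whose root u has, for each k in a set K of positive integers, two child subtrees each isomorphic (with colorings f_k) to a tree whose unique minimal coloring colors its root k, with the penalty property that non-minimal or wrong-root-color colorings cost at least m_k extra. If f'(u) = k ∈ K, then Σf' ≥ Σf + (k − i) + 2·m_k, where f colors u with i and each subtree minimally. -/
open CTree in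
/-- Abstract form of Case 2 of the main theorem. `node i l` is the minimally
colored rooted tree `T` (root `u` colored `i`); `node k l'` is a proper
recoloring `f'` of the same shape whose root gets color `k`. Positions `a ≠ b`
carry the two child subtrees whose minimal colorings color their roots `k`,
with the penalty property that any same-shape proper coloring giving their
root a color other than `k` costs at least `mk` extra. Each child subtree of
`f'` costs at least as much as in `f`. Then `Σf' ≥ Σf + (k - i) + 2·mk`. -/
theorem case2_penalty (i k mk : ℕ) (l l' : List CTree)
    (a b : ℕ) (ha : a < l.length) (hb : b < l.length) (hab : a ≠ b)
    (hshape : SameShape (CTree.node i l) (CTree.node k l'))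
    (hproper : Proper (CTree.node k l'))
    (hsum : ∀ p ∈ l.zip l', sumColors p.1 ≤ sumColors p.2)
    (hrootA : (l.get ⟨a, ha⟩).color = k)
    (hrootB : (l.get ⟨b, hb⟩).color = k)
    (hpenA : ∀ g : CTree, SameShape (l.get ⟨a, ha⟩) g → Proper g →
      g.color ≠ k → sumColors (l.get ⟨a, ha⟩) + mk ≤ sumColors g)
    (hpenB : ∀ g : CTree, SameShape (l.get ⟨b, hb⟩) g → Proper g →
      g.color ≠ k → sumColors (l.get ⟨b, hb⟩) + mk ≤ sumColors g) :
    (sumColors (CTree.node i l) : ℤ) + ((k : ℤ) - (i : ℤ)) + 2 * (mk : ℤ) ≤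
      (sumColors (CTree.node k l') : ℤ) := by
  rw [SameShape] at hshape
  obtain ⟨hlen, hzip⟩ := hshape
  have hproper' : 1 ≤ k ∧ ∀ t ∈ l', color t ≠ k ∧ Proper t := by
    simpa [Proper] using hproper
  have hb' : b < l'.length := hlen ▸ hb
  have ha' : a < l'.length := hlen ▸ ha
  have hzmem : ∀ (n : ℕ) (hn : n < l.length), (l[n], l'[(n : ℕ)]'(hlen ▸ hn)) ∈ l.zip l' := by
    intro n hn
    have : (l.zip l')[n]'(by simp [List.length_zip]; omega) = (l[n], l'[(n:ℕ)]'(hlen ▸ hn)) := by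
      simp [List.getElem_zip]
    rw [← this]
    exact List.getElem_mem _
  have hpt : ∀ (n : ℕ) (hn : n < l.length),
      sumColors l[n] ≤ sumColors (l'[(n:ℕ)]'(hlen ▸ hn)) := fun n hn => hsum _ (hzmem n hn)
  have hA : sumColors l[a] + mk ≤ sumColors (l'[(a:ℕ)]'ha') := by
    apply hpenA
    · exact hzip _ (hzmem a ha)
    · exact (hproper'.2 _ (List.getElem_mem _)).2
    · exact (hproper'.2 _ (List.getElem_mem _)).1
  have hB : sumColors l[b] + mk ≤ sumColors (l'[(b:ℕ)]'hb') := by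
    apply hpenB
    · exact hzip _ (hzmem b hb)
    · exact (hproper'.2 _ (List.getElem_mem _)).2
    · exact (hproper'.2 _ (List.getElem_mem _)).1
  -- sums as Fin sums
  have hmap : ∀ (L : List CTree), (L.attach.map fun ⟨t, _⟩ => sumColors t).sum
      = ∑ n : Fin L.length, sumColors L[n.1] := by
    intro L
    have h1 : (L.attach.map fun ⟨t, _⟩ => sumColors t) = L.map sumColors := by
      simp
    rw [h1, ← Fin.sum_univ_getElem (l := L.map sumColors)]
    rw [← Fin.sum_congr' (fun n : Fin L.length => sumColors L[n.1])
      (by simp : (List.map sumColors L).length = L.length)]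
    apply Finset.sum_congr rfl
    intro n _
    simp
  have hsuml : sumColors (CTree.node i l) = i + ∑ n : Fin l.length, sumColors l[n.1] := by
    rw [sumColors, hmap]
  have hsuml' : sumColors (CTree.node k l') = k + ∑ n : Fin l'.length, sumColors l'[n.1] := by
    rw [sumColors, hmap]
  -- main sum inequality
  have key : (∑ n : Fin l.length, sumColors l[n.1]) + 2 * mk
      ≤ ∑ n : Fin l'.length, sumColors l'[n.1] := by
    have hcast : (∑ n : Fin l'.length, sumColors l'[n.1])
        = ∑ n : Fin l.length, sumColors (l'[(n.1 : ℕ)]'(hlen ▸ n.2)) :=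
      (Fin.sum_congr' (fun n : Fin l'.length => sumColors l'[n.1]) hlen).symm
    rw [hcast]
    have hptw : ∀ n : Fin l.length,
        sumColors l[n.1] + (if n.1 = a then mk else 0) + (if n.1 = b then mk else 0)
          ≤ sumColors (l'[(n.1 : ℕ)]'(hlen ▸ n.2)) := by
      intro n
      by_cases hna : n.1 = a
      · have hnb : ¬ a = b := hab
        simp only [hna, if_pos rfl, if_neg hnb]
        simpa using hA
      · by_cases hnb : n.1 = b
        · have hba : ¬ b = a := fun h => hab h.symm
          simp only [hnb, if_neg hba, if_pos rfl]
          simpa using hB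
        · simp only [if_neg hna, if_neg hnb]
          simpa using hpt n.1 n.2
    calc (∑ n : Fin l.length, sumColors l[n.1]) + 2 * mk
        = ∑ n : Fin l.length, (sumColors l[n.1] + (if n.1 = a then mk else 0)
            + (if n.1 = b then mk else 0)) := by
          rw [Finset.sum_add_distrib, Finset.sum_add_distrib]
          have e1 : (∑ n : Fin l.length, if n.1 = a then mk else 0) = mk := by
            rw [Finset.sum_eq_single (⟨a, ha⟩ : Fin l.length)]
            · simp
            · intro n _ hn
              have : ¬ n.1 = a := by
                intro h; exact hn (Fin.ext h)
              simp [this]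
            · simp
          have e2 : (∑ n : Fin l.length, if n.1 = b then mk else 0) = mk := by
            rw [Finset.sum_eq_single (⟨b, hb⟩ : Fin l.length)]
            · simp
            · intro n _ hn
              have : ¬ n.1 = b := by
                intro h; exact hn (Fin.ext h)
              simp [this]
            · simp
          rw [e1, e2]; ring
      _ ≤ _ := Finset.sum_le_sum fun n _ => hptw n
  rw [hsuml, hsuml']
  omega
end
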